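/- arXiv:2407.10700 — 10 statements merged into one kernel-verified Lean document; each statement's English description precedes it below -/
import Mathlib

section
/- There exist points p, q_1, …, q_12 in ℝ³ such that ‖p − q_i‖ ≤ 1 for all i and ‖q_i − q_j‖ > 1 for all i ≠ j. Equivalently, the complete bipartite graph K_{1,12} is a 3-dimensional unit ball graph (an icosahedral arrangement of points witnesses this). -/
/-!
The twelve vertices of a regular icosahedron centred at the origin have edge length
`2 / √(1 + φ²) ≈ 1.05` times their circumradius, so after scaling the circumradius to `1`
distinct vertices are more than `1` apart. We use the integer approximation `500 · (0, ±1, ±φ)`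
with `φ ≈ 809 / 500` (and its cyclic permutations), scaled by `1 / 952`: every vertex has
squared norm at most `952²`, and distinct vertices are at squared distance more than `952²`.
-/

open EuclideanSpace

section IntPoint

variable {ι : Type*}

def intPoint (v : ι → ℤ) : EuclideanSpace ℝ ι :=
  WithLp.toLp 2 fun k => (v k : ℝ)

lemma intPoint_sub (v w : ι → ℤ) : intPoint v - intPoint w = intPoint (v - w) := by
  ext k
  simp [intPoint]

variable [Fintype ι]

lemma norm_intPoint_sq (v : ι → ℤ) : ‖intPoint v‖ ^ 2 = ((∑ k, v k ^ 2 : ℤ) : ℝ) := by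
  simp [intPoint, real_norm_sq_eq]

lemma norm_intPoint_le_iff (v : ι → ℤ) (n : ℕ) :
    ‖intPoint v‖ ≤ n ↔ ∑ k, v k ^ 2 ≤ (n : ℤ) ^ 2 := by
  rw [← sq_le_sq₀ (norm_nonneg _) n.cast_nonneg, norm_intPoint_sq]
  exact_mod_cast Iff.rfl

lemma lt_norm_intPoint_iff (v : ι → ℤ) (n : ℕ) :
    (n : ℝ) < ‖intPoint v‖ ↔ (n : ℤ) ^ 2 < ∑ k, v k ^ 2 := by
  rw [← sq_lt_sq₀ n.cast_nonneg (norm_nonneg _), norm_intPoint_sq]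
  exact_mod_cast Iff.rfl

end IntPoint

def icosahedronVertex : Fin 12 → Fin 3 → ℤ :=
  ![![0, 500, 809], ![809, 0, 500], ![500, 809, 0],
    ![0, 500, -809], ![-809, 0, 500], ![500, -809, 0],
    ![0, -500, 809], ![809, 0, -500], ![-500, 809, 0],
    ![0, -500, -809], ![-809, 0, -500], ![-500, -809, 0]]

lemma icosahedronVertex_normSq_le (i : Fin 12) :
    ∑ k, icosahedronVertex i k ^ 2 ≤ (952 : ℤ) ^ 2 := by
  revert i
  decide

lemma icosahedronVertex_distSq_gt (i j : Fin 12) (hij : i ≠ j) :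
    (952 : ℤ) ^ 2 < ∑ k, (icosahedronVertex i - icosahedronVertex j) k ^ 2 := by
  revert i j
  decide

/-- `K_{1,12}` is a 3-dimensional unit ball graph: there exist a point `p` and
12 points `q i` in `ℝ³` with `‖p - q i‖ ≤ 1` for all `i` and `‖q i - q j‖ > 1` for `i ≠ j`. -/
theorem k_one_twelve_unit_ball_graph :
    ∃ (p : EuclideanSpace ℝ (Fin 3)) (q : Fin 12 → EuclideanSpace ℝ (Fin 3)),
      (∀ i, ‖p - q i‖ ≤ 1) ∧ (∀ i j, i ≠ j → 1 < ‖q i - q j‖) := by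
  have h952 : (0 : ℝ) < 952 := by norm_num
  refine ⟨0, fun i => (952 : ℝ)⁻¹ • intPoint (icosahedronVertex i), fun i => ?_,
    fun i j hij => ?_⟩
  · have hle := (norm_intPoint_le_iff _ 952).2 (icosahedronVertex_normSq_le i)
    rw [zero_sub, norm_neg, norm_smul, norm_inv, Real.norm_of_nonneg h952.le,
      inv_mul_le_iff₀ h952, mul_one]
    exact_mod_cast hle
  · have hlt := (lt_norm_intPoint_iff _ 952).2 (icosahedronVertex_distSq_gt i j hij)
    rw [← smul_sub, intPoint_sub, norm_smul, norm_inv, Real.norm_of_nonneg h952.le,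
      lt_inv_mul_iff₀ h952, mul_one]
    exact_mod_cast hlt
end

section
/- Let d ≥ 1 and let G be a finite simple graph on at least 3 vertices that admits a d-dimensional unit ball realisation. Then there are infinitely many d-dimensional unit ball realisations of G modulo isometries and scalings; that is, there exists a sequence ρ_0, ρ_1, ρ_2, … of d-dimensional unit ball realisations of G such that for all k ≠ l there is no constant c > 0 and no isometry f of ℝ^d with ρ_l(v) = c · f(ρ_k(v)) for all vertices v. -/
/-- A `d`-dimensional unit ball realisation of a simple graph `G`: edges are at distance
at most 1, non-edges (between distinct vertices) are at distance greater than 1. -/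
def IsUnitBallRealisation {V : Type*} (G : SimpleGraph V) (d : ℕ)
    (ρ : V → EuclideanSpace ℝ (Fin d)) : Prop :=
  ∀ v w : V, v ≠ w →
    (G.Adj v w → ‖ρ v - ρ w‖ ≤ 1) ∧ (¬ G.Adj v w → 1 < ‖ρ v - ρ w‖)

/-!
Scaling a realisation by a factor slightly below `1` turns both defining inequalities into
strict ones with a uniform margin (finitely many pairs), so every configuration within a small
distance `δ` of the scaled one is again a realisation. Among such perturbations, fix the images
of two distinct vertices `v₁ ≠ v₂` at distinct points and push a third vertex `v₀` away from
`v₁` by `δ / (k + 2)`. A similarity between two members of this family fixes the pair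
`v₁, v₂`, hence has ratio `1`, and so cannot change the distance from `v₀` to `v₁`.
-/

open Filter Topology

section Similarity

variable {V E : Type*} [NormedAddCommGroup E] [NormedSpace ℝ E]

lemma similar_of_forall_eq_smul_isometry {ρ σ : V → E} {c : ℝ} {f : E → E}
    (hc : 0 < c) (hf : Isometry f) (h : ∀ v, σ v = c • f (ρ v)) : Similar σ ρ :=
  similar_iff_exists_pos_dist_eq.2
    ⟨c, hc, fun v w => by rw [h, h, dist_smul₀, Real.norm_of_nonneg hc.le, hf.dist_eq]⟩

lemma Similar.dist_eq_of_eq_of_eq {P : Type*} [MetricSpace P] {ρ σ : V → P}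
    (h : Similar σ ρ) {u w : V} (hu : σ u = ρ u) (hw : σ w = ρ w) (huw : ρ u ≠ ρ w)
    (v v' : V) : dist (σ v) (σ v') = dist (ρ v) (ρ v') := by
  obtain ⟨r, -, hr⟩ := similar_iff_exists_pos_dist_eq.1 h
  have hr1 : r = 1 := by
    have huw' : dist (ρ u) (ρ w) ≠ 0 := dist_ne_zero.2 huw
    have := hr u w
    rw [hu, hw] at this
    field_simp at this
    linarith
  rw [hr, hr1, one_mul]

lemma exists_norm_eq_one_norm_add_smul_eq [Nontrivial E] (x : E) :
    ∃ u : E, ‖u‖ = 1 ∧ ∀ ε : ℝ, 0 ≤ ε → ‖x + ε • u‖ = ‖x‖ + ε := by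
  rcases eq_or_ne x 0 with rfl | hx
  · obtain ⟨u, hu⟩ := exists_norm_eq E zero_le_one
    exact ⟨u, hu, fun ε hε => by simp [norm_smul, hu, abs_of_nonneg hε]⟩
  · have hx' : 0 < ‖x‖ := norm_pos_iff.2 hx
    refine ⟨‖x‖⁻¹ • x, by simp [norm_smul, hx], fun ε hε => ?_⟩
    have hsmul : x + ε • ‖x‖⁻¹ • x = (1 + ε * ‖x‖⁻¹) • x := by
      rw [smul_smul]; module
    rw [hsmul, norm_smul, Real.norm_of_nonneg (by positivity)]
    field_simp

lemma exists_pairwise_not_similar_near [Nontrivial E] (ρ : V → E) {δ : ℝ} (hδ : 0 < δ)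
    {v₀ v₁ v₂ : V} (h01 : v₀ ≠ v₁) (h02 : v₀ ≠ v₂) (h12 : v₁ ≠ v₂) :
    ∃ σ : ℕ → V → E, (∀ k v, dist (σ k v) (ρ v) ≤ δ) ∧
      Pairwise fun k l => ¬ Similar (σ l) (σ k) := by
  classical
  obtain ⟨u₁, hu₁, hb⟩ := exists_norm_eq_one_norm_add_smul_eq (ρ v₁ - ρ v₂)
  set b := ρ v₁ + (δ / 2) • u₁
  obtain ⟨u₀, hu₀, ha⟩ := exists_norm_eq_one_norm_add_smul_eq (ρ v₀ - b)
  set ε : ℕ → ℝ := fun k => δ / (k + 2)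
  have hε : ∀ k, 0 ≤ ε k ∧ ε k ≤ δ := fun k =>
    ⟨by positivity, div_le_self hδ.le (by linarith [(k.cast_nonneg : (0 : ℝ) ≤ k)])⟩
  set σ : ℕ → V → E := fun k => Function.update (Function.update ρ v₁ b) v₀ (ρ v₀ + ε k • u₀)
  have hσ₀ : ∀ k, σ k v₀ = ρ v₀ + ε k • u₀ := fun k => by simp [σ]
  have hσ₁ : ∀ k, σ k v₁ = b := fun k => by simp [σ, h01.symm]
  have hσ₂ : ∀ k, σ k v₂ = ρ v₂ := fun k => by simp [σ, h02.symm, h12.symm]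
  refine ⟨σ, fun k v => ?_, fun k l hkl hsim => hkl ?_⟩
  · by_cases hv₀ : v = v₀
    · subst hv₀
      rw [hσ₀, dist_self_add_left, norm_smul, hu₀, mul_one, Real.norm_of_nonneg (hε k).1]
      exact (hε k).2
    by_cases hv₁ : v = v₁
    · subst hv₁
      rw [hσ₁, dist_self_add_left, norm_smul, hu₁, mul_one, Real.norm_of_nonneg (by positivity)]
      linarith
    simp [σ, hv₀, hv₁, hδ.le]
  · have hb₂ : b ≠ ρ v₂ := by
      rw [← dist_pos, dist_eq_norm, add_sub_right_comm, hb _ (by positivity)]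
      positivity
    have hdist := hsim.dist_eq_of_eq_of_eq ((hσ₁ l).trans (hσ₁ k).symm)
      ((hσ₂ l).trans (hσ₂ k).symm) (by rwa [hσ₁, hσ₂]) v₀ v₁
    rw [hσ₀, hσ₀, hσ₁, hσ₁, dist_eq_norm, dist_eq_norm, add_sub_right_comm,
      add_sub_right_comm, ha _ (hε l).1, ha _ (hε k).1, add_right_inj] at hdist
    have hkl' : (k : ℝ) + 2 = l + 2 := by
      simp only [ε] at hdist
      field_simp at hdist
      linarith
    exact_mod_cast add_right_cancel hkl'

end Similarity

section Realisation

variable {V : Type*} {G : SimpleGraph V} {d : ℕ} {ρ σ : V → EuclideanSpace ℝ (Fin d)}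

lemma isUnitBallRealisation_of_forall_dist_le {δ : ℝ}
    (hρ : ∀ v w, v ≠ w → (G.Adj v w → dist (ρ v) (ρ w) + 2 * δ ≤ 1) ∧
      (¬ G.Adj v w → 1 < dist (ρ v) (ρ w) - 2 * δ))
    (hσ : ∀ v, dist (σ v) (ρ v) ≤ δ) : IsUnitBallRealisation G d σ := by
  intro v w hvw
  simp only [← dist_eq_norm]
  have hle := dist_triangle4 (σ v) (ρ v) (ρ w) (σ w)
  have hge := dist_triangle4 (ρ v) (σ v) (σ w) (ρ w)
  have hv := hσ v
  have hw := hσ w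
  rw [dist_comm (ρ w) (σ w)] at hle
  rw [dist_comm (ρ v) (σ v)] at hge
  exact ⟨fun h => by linarith [(hρ v w hvw).1 h], fun h => by linarith [(hρ v w hvw).2 h]⟩

lemma IsUnitBallRealisation.exists_one_lt_forall_lt_dist [Finite V]
    (hρ : IsUnitBallRealisation G d ρ) :
    ∃ m : ℝ, 1 < m ∧ ∀ v w, v ≠ w → ¬ G.Adj v w → m < dist (ρ v) (ρ w) := by
  have hnear : ∀ᶠ m in 𝓝 (1 : ℝ), ∀ v w, v ≠ w → ¬ G.Adj v w → m < dist (ρ v) (ρ w) := by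
    simp only [eventually_all]
    intro v w hvw hadj
    exact eventually_lt_nhds (by rw [dist_eq_norm]; exact (hρ v w hvw).2 hadj)
  obtain ⟨m, hm, hm1⟩ := ((hnear.filter_mono nhdsWithin_le_nhds).and
    (self_mem_nhdsWithin : Set.Ioi (1 : ℝ) ∈ 𝓝[>] 1)).exists
  exact ⟨m, hm1, hm⟩

/-- The witness is `ρ` scaled by `2 / (m + 1)`, where `m > 1` bounds the non-edge distances
from below: this scaling leaves the margin `(m - 1) / (m + 1)` on both sides of `1`. -/
lemma IsUnitBallRealisation.exists_forall_dist_le_isUnitBallRealisation [Finite V]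
    (hρ : IsUnitBallRealisation G d ρ) :
    ∃ (ρ' : V → EuclideanSpace ℝ (Fin d)) (δ : ℝ), 0 < δ ∧
      ∀ σ, (∀ v, dist (σ v) (ρ' v) ≤ δ) → IsUnitBallRealisation G d σ := by
  obtain ⟨m, hm, hmρ⟩ := hρ.exists_one_lt_forall_lt_dist
  have hm0 : 0 < m + 1 := by linarith
  refine ⟨fun v => (2 / (m + 1)) • ρ v, (m - 1) / (4 * (m + 1)),
    div_pos (by linarith) (by linarith), fun σ hσ =>
      isUnitBallRealisation_of_forall_dist_le (fun v w hvw => ?_) hσ⟩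
  rw [dist_smul₀, Real.norm_of_nonneg (by positivity)]
  refine ⟨fun hadj => ?_, fun hadj => ?_⟩
  · have hvw : dist (ρ v) (ρ w) ≤ 1 := by rw [dist_eq_norm]; exact (hρ v w hvw).1 hadj
    rw [div_mul_eq_mul_div, mul_div_assoc', div_add_div _ _ hm0.ne' (by positivity),
      div_le_one (by positivity)]
    nlinarith
  · have hvw := hmρ v w hvw hadj
    rw [div_mul_eq_mul_div, mul_div_assoc', div_sub_div _ _ hm0.ne' (by positivity),
      one_lt_div (by positivity)]
    nlinarith

end Realisation

/-- A unit ball graph on at least 3 vertices has infinitely many unit ball realisations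
modulo isometries and scalings: there is a sequence of unit ball realisations no two of
which agree up to a positive scaling composed with an isometry of `ℝ^d`. -/
theorem infinitely_many_unit_ball_realisations
    {V : Type*} [Fintype V] (G : SimpleGraph V) (d : ℕ) (hd : 1 ≤ d)
    (hV : 3 ≤ Fintype.card V)
    (h : ∃ ρ : V → EuclideanSpace ℝ (Fin d), IsUnitBallRealisation G d ρ) :
    ∃ ρ : ℕ → V → EuclideanSpace ℝ (Fin d),
      (∀ k, IsUnitBallRealisation G d (ρ k)) ∧
      ∀ k l, k ≠ l →
        ¬ ∃ (c : ℝ) (f : EuclideanSpace ℝ (Fin d) ≃ᵢ EuclideanSpace ℝ (Fin d)),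
          0 < c ∧ ∀ v, ρ l v = c • f (ρ k v) := by
  obtain ⟨ρ, hρ⟩ := h
  obtain ⟨v₀, v₁, v₂, h01, h02, h12⟩ := Fintype.two_lt_card_iff.1 hV
  have : Nontrivial (EuclideanSpace ℝ (Fin d)) :=
    Module.nontrivial_of_finrank_pos (R := ℝ) (by rwa [finrank_euclideanSpace_fin])
  obtain ⟨ρ', δ, hδ, hstable⟩ := hρ.exists_forall_dist_le_isUnitBallRealisation
  obtain ⟨σ, hσρ', hσ⟩ := exists_pairwise_not_similar_near ρ' hδ h01 h02 h12
  exact ⟨σ, fun k => hstable _ (hσρ' k), fun k l hkl ⟨c, f, hc, hcf⟩ =>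
    hσ hkl (similar_of_forall_eq_smul_isometry hc f.isometry hcf)⟩
end

section
/- Fix d ≥ 1 and n ≥ 1, and let ρ : {0,1,…,n−1} → ℝ^d be generic. If ρ' : {0,1,…,n−1} → ℝ^d satisfies ‖ρ'(i) − ρ'(j)‖ = ‖ρ(i) − ρ(j)‖ for all pairs i, j with 1 ≤ |i − j| ≤ d+1, then ρ' is congruent to ρ. In graph-theoretic language: the (d+1)-st power of a path is globally d-rigid. -/
/-!
Genericity puts the points in general position: any `m + 1 ≤ d + 1` of them are affinely
independent, because an `m × m` minor of their difference vectors is a nonzero polynomial with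
rational coefficients in the coordinates. The first `min n (d + 1)` vertices are pairwise
adjacent, so `ρ'` has the same Gram matrix as `ρ` on them, and a linear isometry carries one
affinely independent family onto the other. Each later vertex `i` is adjacent to the `d + 1`
vertices before it, whose images affinely span `ℝ^d`, and a point is determined by its distances
to an affinely spanning family; so the same isometry also carries `ρ i` to `ρ' i`.
-/

open Module Function MvPolynomial

section InnerProductSpace

variable {E : Type*} [NormedAddCommGroup E] [InnerProductSpace ℝ E]

lemma inner_sub_sub_eq_of_dist_eq {a b c a' b' c' : E} (ha : dist a' c' = dist a c)
    (hb : dist b' c' = dist b c) (hab : dist a' b' = dist a b) :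
    inner ℝ (a' - c') (b' - c') = inner ℝ (a - c) (b - c) := by
  simp only [real_inner_eq_norm_mul_self_add_norm_mul_self_sub_norm_sub_mul_self_div_two,
    sub_sub_sub_cancel_right, ← dist_eq_norm, ha, hb, hab]

lemma exists_linearIsometryEquiv_apply_eq_of_inner_eq [FiniteDimensional ℝ E] {ι : Type*}
    {u v : ι → E} (hu : LinearIndependent ℝ u)
    (huv : ∀ i j, inner ℝ (v i) (v j) = inner ℝ (u i) (u j)) :
    ∃ T : E ≃ₗᵢ[ℝ] E, ∀ i, T (u i) = v i := by
  let b : Basis ι ℝ (Submodule.span ℝ (Set.range u)) := .span hu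
  have hb : ∀ i, (b i : E) = u i := fun i => congrArg Subtype.val (Basis.span_apply hu i)
  let L := b.constr ℝ v
  have hL : ∀ i, L (b i) = v i := b.constr_basis ℝ v
  have hinner : ∀ x y, inner ℝ (L x) (L y) = inner ℝ (x : E) y := by
    have := LinearMap.ext_basis (B := (innerₗ E).compl₁₂ L L)
      (B' := (innerₗ E).compl₁₂ (Submodule.subtype _) (Submodule.subtype _)) b b
      (fun i j => by simpa [hL, hb] using huv i j)
    exact fun x y => LinearMap.congr_fun₂ this x y
  let T : E ≃ₗᵢ[ℝ] E := (L.isometryOfInner hinner).extend.toLinearIsometryEquiv rfl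
  refine ⟨T, fun i => ?_⟩
  rw [← hb, ← hL]
  exact LinearIsometry.extend_apply _ _

lemma AffineIndependent.exists_isometryEquiv_of_dist_eq [FiniteDimensional ℝ E] {ι : Type*}
    {p p' : ι → E} (hp : AffineIndependent ℝ p)
    (h : ∀ i j, dist (p' i) (p' j) = dist (p i) (p j)) :
    ∃ f : E ≃ᵢ E, p' = f ∘ p := by
  rcases isEmpty_or_nonempty ι with _ | ⟨⟨i₀⟩⟩
  · exact ⟨IsometryEquiv.refl E, funext isEmptyElim⟩
  obtain ⟨T, hT⟩ := exists_linearIsometryEquiv_apply_eq_of_inner_eq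
    ((affineIndependent_iff_linearIndependent_vsub ℝ p i₀).1 hp)
    (v := fun i : {i // i ≠ i₀} => p' i - p' i₀)
    fun i j => inner_sub_sub_eq_of_dist_eq (h _ _) (h _ _) (h _ _)
  let f : E ≃ᵃⁱ[ℝ] E := (AffineIsometryEquiv.vaddConst ℝ (p i₀)).symm.trans
    (T.toAffineIsometryEquiv.trans (AffineIsometryEquiv.vaddConst ℝ (p' i₀)))
  refine ⟨f.toIsometryEquiv, funext fun i => ?_⟩
  by_cases hi : i = i₀
  · subst hi
    simp [f]
  · simpa [f] using (congrArg (· + p' i₀) (hT ⟨i, hi⟩)).symm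

lemma eq_of_dist_eq_of_affineSpan_eq_top {ι : Type*} {p : ι → E}
    (hp : affineSpan ℝ (Set.range p) = ⊤) {x y : E} (h : ∀ i, dist x (p i) = dist y (p i)) :
    x = y := by
  have hperp : vectorSpan ℝ (Set.range p) ≤ (ℝ ∙ (y - x))ᗮ := by
    rw [vectorSpan_def, Submodule.span_le]
    rintro _ ⟨_, ⟨i, rfl⟩, _, ⟨j, rfl⟩, rfl⟩
    rw [SetLike.mem_coe, Submodule.mem_orthogonal_singleton_iff_inner_right, real_inner_comm]
    exact EuclideanGeometry.inner_vsub_vsub_of_dist_eq_of_dist_eq (h j) (h i)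
  rw [AffineSubspace.vectorSpan_eq_top_of_affineSpan_eq_top _ _ _ hp, top_le_iff,
    Submodule.orthogonal_eq_top_iff, Submodule.span_singleton_eq_bot, sub_eq_zero] at hperp
  exact hperp.symm

end InnerProductSpace

def InGeneralPosition {ι E : Type*} [AddCommGroup E] [Module ℝ E] (d : ℕ) (ρ : ι → E) :
    Prop :=
  ∀ m ≤ d, ∀ g : Fin (m + 1) ↪ ι, AffineIndependent ℝ (ρ ∘ g)

namespace InGeneralPosition

lemma comp_embedding {ι κ E : Type*} [AddCommGroup E] [Module ℝ E] {d : ℕ} {ρ : ι → E}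
    (hρ : InGeneralPosition d ρ) (e : κ ↪ ι) : InGeneralPosition d (ρ ∘ e) :=
  fun m hm g => hρ m hm (g.trans e)

theorem exists_isometryEquiv_of_pathPower_dist_eq {E : Type*} [NormedAddCommGroup E]
    [InnerProductSpace ℝ E] [FiniteDimensional ℝ E] {d : ℕ} (hE : finrank ℝ E = d) :
    ∀ {n : ℕ} {ρ ρ' : Fin n → E}, InGeneralPosition d ρ →
      (∀ i j : Fin n, (j : ℕ) < i → (i : ℕ) ≤ j + (d + 1) →
        dist (ρ' i) (ρ' j) = dist (ρ i) (ρ j)) →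
      ∃ f : E ≃ᵢ E, ρ' = f ∘ ρ
  | 0, _, _, _, _ => ⟨IsometryEquiv.refl E, funext (·.elim0)⟩
  | n + 1, ρ, ρ', hρ, h => by
    by_cases hn : n ≤ d
    · have hρ_aff : AffineIndependent ℝ ρ := hρ n hn (Embedding.refl _)
      refine hρ_aff.exists_isometryEquiv_of_dist_eq fun i j => ?_
      rcases lt_trichotomy i j with hij | rfl | hij
      · rw [dist_comm, dist_comm (ρ i)]
        exact h j i hij (by omega)
      · simp
      · exact h i j hij (by omega)
    obtain ⟨f, hf⟩ := exists_isometryEquiv_of_pathPower_dist_eq hE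
      (hρ.comp_embedding Fin.castSuccEmb) fun i j hji hij => h i.castSucc j.castSucc hji hij
    let window : Fin (d + 1) ↪ Fin n :=
      ⟨fun j => ⟨n - (d + 1) + j, by omega⟩, fun j j' hjj' => by simpa [Fin.ext_iff] using hjj'⟩
    have hspan : affineSpan ℝ (Set.range (ρ ∘ window.trans Fin.castSuccEmb)) = ⊤ :=
      (hρ d le_rfl _).affineSpan_eq_top_iff_card_eq_finrank_add_one.2 (by simp [hE])
    have hlast : f.symm (ρ' (Fin.last n)) = ρ (Fin.last n) := by
      refine eq_of_dist_eq_of_affineSpan_eq_top hspan fun j => ?_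
      calc dist (f.symm (ρ' (Fin.last n))) (ρ (window j).castSucc)
          = dist (ρ' (Fin.last n)) (f (ρ (window j).castSucc)) := by
            rw [← f.dist_eq, f.apply_symm_apply]
        _ = dist (ρ' (Fin.last n)) (ρ' (window j).castSucc) :=
            congrArg (dist _) (congrFun hf (window j)).symm
        _ = dist (ρ (Fin.last n)) (ρ (window j).castSucc) :=
            h _ _ (window j).isLt (show n ≤ n - (d + 1) + j + (d + 1) by omega)
    refine ⟨f, funext fun i => Fin.lastCases ?_ (fun i => congrFun hf i) i⟩
    simp [← hlast]

end InGeneralPosition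

lemma linearIndependent_of_det_ne_zero {κ ι : Type*} [Fintype κ] [DecidableEq κ]
    {u : κ → EuclideanSpace ℝ ι} (e : κ → ι) (hu : (Matrix.of fun k l => u k (e l)).det ≠ 0) :
    LinearIndependent ℝ u := by
  let π : EuclideanSpace ℝ ι →ₗ[ℝ] κ → ℝ :=
    LinearMap.pi fun l => (EuclideanSpace.proj (e l) : EuclideanSpace ℝ ι →L[ℝ] ℝ).toLinearMap
  exact .of_comp π (Matrix.linearIndependent_rows_of_det_ne_zero hu)

section DifferenceMinor

variable {ι : Type*} {d m : ℕ} (hm : m ≤ d) (g : Fin (m + 1) → ι)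

noncomputable def differenceMinor : MvPolynomial (ι × Fin d) ℚ :=
  (Matrix.of fun k l : Fin m => X (g k.succ, Fin.castLE hm l) - X (g 0, Fin.castLE hm l)).det

lemma aeval_differenceMinor {R : Type*} [CommRing R] [Algebra ℚ R] (x : ι × Fin d → R) :
    aeval x (differenceMinor hm g) =
      (Matrix.of fun k l : Fin m =>
        x (g k.succ, Fin.castLE hm l) - x (g 0, Fin.castLE hm l)).det := by
  rw [differenceMinor, AlgHom.map_det]
  congr 1
  ext k l
  simp

variable {hm g} in
lemma differenceMinor_ne_zero (hg : Injective g) : differenceMinor hm g ≠ 0 := by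
  -- `σ` puts `g (k + 1)` at the `k`-th unit vector and `g 0` at the origin.
  let σ : ι × Fin d → ℚ := fun x =>
    extend g (fun j (c : Fin d) => if (c : ℕ) + 1 = j then (1 : ℚ) else 0) 0 x.1 x.2
  have hσ : ∀ j c, σ (g j, c) = if (c : ℕ) + 1 = j then 1 else 0 := fun j c =>
    congrFun (hg.extend_apply _ _ j) c
  have hσ_minor : (Matrix.of fun k l : Fin m =>
      σ (g k.succ, Fin.castLE hm l) - σ (g 0, Fin.castLE hm l)) = 1 := by
    ext k l
    simp [hσ, Matrix.one_apply, Fin.ext_iff, eq_comm]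
  intro h0
  simpa [h0, hσ_minor] using aeval_differenceMinor hm g σ

end DifferenceMinor

theorem inGeneralPosition_of_algebraicIndependent {ι : Type*} {d : ℕ}
    {ρ : ι → EuclideanSpace ℝ (Fin d)}
    (hρ : AlgebraicIndependent ℚ fun x : ι × Fin d => ρ x.1 x.2) :
    InGeneralPosition d ρ := by
  intro m hm g
  rw [affineIndependent_iff_linearIndependent_vsub ℝ _ 0,
    ← linearIndependent_equiv (finSuccAboveEquiv 0)]
  refine linearIndependent_of_det_ne_zero (Fin.castLE hm) fun h0 =>
    differenceMinor_ne_zero (hm := hm) g.injective (hρ.eq_zero_of_aeval_eq_zero _ ?_)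
  rw [aeval_differenceMinor, ← h0]
  rfl

theorem path_power_globally_rigid_general (d n : ℕ)
    (ρ ρ' : Fin n → EuclideanSpace ℝ (Fin d))
    (hgen : AlgebraicIndependent ℚ (fun vi : Fin n × Fin d => ρ vi.1 vi.2))
    (h : ∀ i j : Fin n, 1 ≤ |(i : ℤ) - (j : ℤ)| → |(i : ℤ) - (j : ℤ)| ≤ d + 1 →
      ‖ρ' i - ρ' j‖ = ‖ρ i - ρ j‖) :
    ∃ f : EuclideanSpace ℝ (Fin d) ≃ᵢ EuclideanSpace ℝ (Fin d), ρ' = ⇑f ∘ ρ := by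
  refine (inGeneralPosition_of_algebraicIndependent hgen).exists_isometryEquiv_of_pathPower_dist_eq
    finrank_euclideanSpace_fin fun i j hji hij => ?_
  simp only [dist_eq_norm]
  exact h i j (by rw [abs_of_pos (by omega)]; omega) (by rw [abs_of_pos (by omega)]; omega)

/-- The `(d+1)`-st power of a path is globally `d`-rigid: if `ρ : {0,…,n-1} → ℝ^d` is
generic and `ρ'` has the same distances as `ρ` for all pairs `i, j` with
`1 ≤ |i - j| ≤ d + 1`, then `ρ'` is congruent to `ρ`. -/
theorem path_power_globally_rigid (d n : ℕ) (hd : 1 ≤ d) (hn : 1 ≤ n)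
    (ρ ρ' : Fin n → EuclideanSpace ℝ (Fin d))
    (hgen : AlgebraicIndependent ℚ (fun vi : Fin n × Fin d => ρ vi.1 vi.2))
    (h : ∀ i j : Fin n, 1 ≤ |(i : ℤ) - (j : ℤ)| → |(i : ℤ) - (j : ℤ)| ≤ d + 1 →
      ‖ρ' i - ρ' j‖ = ‖ρ i - ρ j‖) :
    ∃ f : EuclideanSpace ℝ (Fin d) ≃ᵢ EuclideanSpace ℝ (Fin d), ρ' = ⇑f ∘ ρ :=
  path_power_globally_rigid_general d n ρ ρ' hgen h
end

section
/- Let P be a finite nonempty set of points in ℝ² such that ‖p − q‖ ≥ 1 for all distinct p, q ∈ P. Then there exists a point p ∈ P such that at most 3 points q ∈ P satisfy ‖p − q‖ = 1. Consequently, the minimum degree of a nonempty penny graph is at most 3. -/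
/-!
Take the lowest point `p` of `P` (leftmost among the lowest). Every unit neighbour `q` of `p`
then satisfies `arg (q - p) ∈ [0, π)`. Two unit neighbours at distance at least 1 from each other
have arguments at least `π / 3` apart, since otherwise the cosine of the angle between them would
exceed `1 / 2`. So the three intervals `[kπ/3, (k+1)π/3)` each contain at most one of them.
-/

open Real

theorem Set.ncard_le_of_mapsTo_Ico_of_separated {α : Type*} {S : Set α} {f : α → ℝ}
    {a δ : ℝ} {n : ℕ} (hδ : 0 < δ) (hf : ∀ x ∈ S, f x ∈ Ico a (a + n * δ))
    (hsep : S.Pairwise fun x y => δ ≤ |f x - f y|) : S.ncard ≤ n := by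
  let bucket (x : α) : ℕ := ⌊(f x - a) / δ⌋₊
  have hmaps : ∀ x ∈ S, bucket x ∈ (Finset.range n : Set ℕ) := by
    intro x hx
    obtain ⟨hax, hxa⟩ := hf x hx
    rw [Finset.coe_range, Set.mem_Iio, Nat.floor_lt (div_nonneg (sub_nonneg.2 hax) hδ.le),
      div_lt_iff₀ hδ]
    linarith
  have hinj : InjOn bucket S := by
    intro x hx y hy hxy
    by_contra hne
    have hsub : |(f x - a) / δ - (f y - a) / δ| < 1 := by
      have hx0 := div_nonneg (sub_nonneg.2 (hf x hx).1) hδ.le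
      have hy0 := div_nonneg (sub_nonneg.2 (hf y hy).1) hδ.le
      apply Int.abs_sub_lt_one_of_floor_eq_floor
      rw [← Int.natCast_floor_eq_floor hx0, ← Int.natCast_floor_eq_floor hy0]
      exact congrArg _ hxy
    rw [← sub_div, sub_sub_sub_cancel_right, abs_div, abs_of_pos hδ, div_lt_one hδ] at hsub
    exact (hsep hx hy hne).not_gt hsub
  simpa using Set.ncard_le_ncard_of_injOn bucket hmaps hinj (Finset.finite_toSet _)

namespace Complex

theorem pi_div_three_le_abs_arg_sub {z w : ℂ} (hz : ‖z‖ = 1) (hw : ‖w‖ = 1)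
    (h : 1 ≤ ‖z - w‖) : π / 3 ≤ |z.arg - w.arg| := by
  have hz0 : z ≠ 0 := norm_ne_zero_iff.1 (by rw [hz]; exact one_ne_zero)
  have hw0 : w ≠ 0 := norm_ne_zero_iff.1 (by rw [hw]; exact one_ne_zero)
  have hcos : Real.cos (z.arg - w.arg) = z.re * w.re + z.im * w.im := by
    rw [Real.cos_sub, cos_arg hz0, cos_arg hw0, sin_arg, sin_arg, hz, hw]; ring
  have hsq : ‖z - w‖ ^ 2 = 2 - 2 * Real.cos (z.arg - w.arg) := by
    have hz2 := normSq_eq_norm_sq z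
    have hw2 := normSq_eq_norm_sq w
    rw [hcos, ← normSq_eq_norm_sq, normSq_apply]
    rw [hz, normSq_apply] at hz2
    rw [hw, normSq_apply] at hw2
    simp only [sub_re, sub_im]
    linear_combination hz2 + hw2
  by_contra! hlt
  have : 1 / 2 < Real.cos (z.arg - w.arg) := by
    rw [← Real.cos_abs, ← cos_pi_div_three]
    exact cos_lt_cos_of_nonneg_of_le_pi (abs_nonneg _) (by linarith [pi_pos]) hlt
  nlinarith

theorem arg_sub_mem_Ico_of_toLex_lt {p q : ℂ}
    (hlt : toLex (p.im, p.re) < toLex (q.im, q.re)) : (q - p).arg ∈ Set.Ico 0 π := by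
  rw [Set.mem_Ico, arg_nonneg_iff, arg_lt_pi_iff, sub_im, sub_re]
  rcases Prod.Lex.toLex_lt_toLex.1 hlt with him | ⟨him, hre⟩
  · exact ⟨by linarith, Or.inr (by linarith)⟩
  · exact ⟨by linarith, Or.inl (by linarith)⟩

theorem exists_ncard_unit_neighbors_le_three (P : Finset ℂ) (hP : P.Nonempty)
    (h : ∀ p ∈ P, ∀ q ∈ P, p ≠ q → 1 ≤ ‖p - q‖) :
    ∃ p ∈ P, {q ∈ (P : Set ℂ) | ‖p - q‖ = 1}.ncard ≤ 3 := by
  obtain ⟨p, hp, hmin⟩ := P.exists_min_image (fun z => toLex (z.im, z.re)) hP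
  refine ⟨p, hp, ?_⟩
  have hlt : ∀ q ∈ P, q ≠ p → toLex (p.im, p.re) < toLex (q.im, q.re) := fun q hq hne =>
    (hmin q hq).lt_of_ne fun heq => hne (ext (congrArg (·.2) heq).symm (congrArg (·.1) heq).symm)
  have hunit : ∀ q ∈ {q ∈ (P : Set ℂ) | ‖p - q‖ = 1}, ‖q - p‖ = 1 := fun q hq => by
    rw [norm_sub_rev]; exact hq.2
  apply Set.ncard_le_of_mapsTo_Ico_of_separated (f := fun q => (q - p).arg) (a := 0)
    (div_pos pi_pos three_pos)
  · rintro q ⟨hq, hpq⟩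
    have hne : q ≠ p := by rintro rfl; simp at hpq
    simpa [mul_div_cancel₀ π three_ne_zero] using arg_sub_mem_Ico_of_toLex_lt (hlt q hq hne)
  · intro q hq r hr hne
    refine pi_div_three_le_abs_arg_sub (hunit q hq) (hunit r hr) ?_
    rw [sub_sub_sub_cancel_right]
    exact h q hq.1 r hr.1 hne

end Complex

/-- In any finite nonempty set of points in `ℝ²` with pairwise distances at least 1,
some point has at most 3 points at distance exactly 1 from it. Consequently the minimum
degree of a nonempty penny graph is at most 3. -/
theorem penny_min_degree (P : Finset (EuclideanSpace ℝ (Fin 2))) (hP : P.Nonempty)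
    (h : ∀ p ∈ P, ∀ q ∈ P, p ≠ q → 1 ≤ ‖p - q‖) :
    ∃ p ∈ P, {q ∈ (P : Set (EuclideanSpace ℝ (Fin 2))) | ‖p - q‖ = 1}.ncard ≤ 3 := by
  let e := Complex.orthonormalBasisOneI.repr.symm
  have he (p q : EuclideanSpace ℝ (Fin 2)) : ‖e p - e q‖ = ‖p - q‖ := by
    rw [← map_sub, LinearIsometryEquiv.norm_map]
  obtain ⟨z, hz, hdeg⟩ := Complex.exists_ncard_unit_neighbors_le_three (P.image e) (hP.image e)
    (by simpa only [Finset.forall_mem_image, he, e.injective.ne_iff] using h)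
  obtain ⟨p, hp, rfl⟩ := Finset.mem_image.1 hz
  refine ⟨p, hp, ?_⟩
  rw [← Set.ncard_image_of_injective _ e.injective]
  convert hdeg using 2
  ext w
  simp only [Set.mem_image, Set.mem_ofPred_eq, Finset.coe_image, Finset.mem_coe]
  constructor
  · rintro ⟨q, ⟨hq, hpq⟩, rfl⟩
    exact ⟨⟨q, hq, rfl⟩, by rwa [he]⟩
  · rintro ⟨⟨q, hq, rfl⟩, hpq⟩
    exact ⟨q, ⟨hq, by rwa [he] at hpq⟩, rfl⟩
end

section
/- There do not exist points a, b, x_1, …, x_6 in ℝ³ such that ‖a − x_i‖ = 1 and ‖b − x_i‖ = 1 for all i, ‖a − b‖ > 1, and ‖x_i − x_j‖ > 1 for all i ≠ j. Equivalently, the complete bipartite graph K_{2,6} is not a marble graph. -/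
/-!
If `x` is at distance 1 from both `a` and `b`, then `x` lies on the circle in the bisector plane
of `a b` centred at the midpoint `m`, with radius `r` satisfying `r² = 1 - ‖a - b‖² / 4 < 3 / 4`.
Among six points on a circle some two subtend an angle of at most `π / 3` at the centre, so their
distance is at most `r < 1`.
-/

open Real Module

theorem pi_div_three_lt_and_lt_of_cos_lt_half {t : ℝ} (h0 : 0 ≤ t) (h2π : t ≤ 2 * π)
    (hcos : cos t < 1 / 2) : π / 3 < t ∧ t < 5 * π / 3 := by
  constructor
  · by_contra! ht
    have := cos_le_cos_of_nonneg_of_le_pi h0 (by linarith [pi_pos]) ht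
    rw [cos_pi_div_three] at this
    linarith
  · by_contra! ht
    have := cos_le_cos_of_nonneg_of_le_pi (by linarith) (by linarith [pi_pos])
      (show 2 * π - t ≤ π / 3 by linarith)
    rw [cos_two_pi_sub, cos_pi_div_three] at this
    linarith

theorem exists_ne_half_le_cos_sub (θ : Fin 6 → ℝ) (hθ : ∀ i, θ i ∈ Set.Ioc (-π) π) :
    ∃ i j, i ≠ j ∧ 1 / 2 ≤ cos (θ i - θ j) := by
  by_contra! h
  set σ := Tuple.sort θ
  have hmono : Monotone (θ ∘ σ) := Tuple.monotone_sort θ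
  -- the five consecutive gaps of the sorted angles each exceed `π / 3`,
  -- but their sum is below `5 π / 3`
  have gap : ∀ i j : Fin 6, i < j →
      π / 3 < θ (σ j) - θ (σ i) ∧ θ (σ j) - θ (σ i) < 5 * π / 3 := fun i j hij =>
    pi_div_three_lt_and_lt_of_cos_lt_half (sub_nonneg.2 (hmono hij.le))
      (by linarith [(hθ (σ i)).1, (hθ (σ j)).2]) (h _ _ (σ.injective.ne hij.ne'))
  linarith [(gap 0 1 (by decide)).1, (gap 1 2 (by decide)).1, (gap 2 3 (by decide)).1,
    (gap 3 4 (by decide)).1, (gap 4 5 (by decide)).1, (gap 0 5 (by decide)).2]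

namespace Complex

theorem sq_norm_sub_eq (z w : ℂ) :
    ‖z - w‖ ^ 2 = ‖z‖ ^ 2 + ‖w‖ ^ 2 - 2 * ‖z‖ * ‖w‖ * Real.cos (z.arg - w.arg) := by
  rw [Complex.sq_norm, normSq_apply, sub_re, sub_im, ← norm_mul_cos_arg z, ← norm_mul_sin_arg z,
    ← norm_mul_cos_arg w, ← norm_mul_sin_arg w, Real.cos_sub]
  linear_combination
    ‖z‖ ^ 2 * Real.sin_sq_add_cos_sq z.arg + ‖w‖ ^ 2 * Real.sin_sq_add_cos_sq w.arg

theorem exists_ne_norm_sub_le_of_norm_eq (z : Fin 6 → ℂ) (r : ℝ)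
    (hz : ∀ i, ‖z i‖ = r) : ∃ i j, i ≠ j ∧ ‖z i - z j‖ ≤ r := by
  obtain ⟨i, j, hij, hcos⟩ := exists_ne_half_le_cos_sub (fun i => (z i).arg)
    (fun i => arg_mem_Ioc (z i))
  refine ⟨i, j, hij, ?_⟩
  have hr : 0 ≤ r := hz i ▸ norm_nonneg _
  rw [← pow_le_pow_iff_left₀ (norm_nonneg _) hr two_ne_zero, sq_norm_sub_eq, hz, hz]
  nlinarith [mul_nonneg (sq_nonneg r) (sub_nonneg.2 hcos)]

end Complex

theorem exists_ne_norm_sub_le_of_finrank_eq_two {E : Type*} [NormedAddCommGroup E]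
    [InnerProductSpace ℝ E] (hE : finrank ℝ E = 2) (y : Fin 6 → E) (r : ℝ)
    (hy : ∀ i, ‖y i‖ = r) : ∃ i j, i ≠ j ∧ ‖y i - y j‖ ≤ r := by
  have : FiniteDimensional ℝ E := Module.finite_of_finrank_eq_succ hE
  let f : E ≃ₗᵢ[ℝ] ℂ :=
    (Complex.isometryOfOrthonormal ((stdOrthonormalBasis ℝ E).reindex (finCongr hE))).symm
  obtain ⟨i, j, hij, h⟩ := Complex.exists_ne_norm_sub_le_of_norm_eq (f ∘ y) r (by simpa using hy)
  exact ⟨i, j, hij, by simpa [← map_sub] using h⟩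

/-- `K_{2,6}` is not a marble graph: there are no points `a, b ∈ ℝ³` with `‖a - b‖ > 1`
together with 6 points `x i` at distance exactly 1 from both `a` and `b` that are
pairwise at distance greater than 1. -/
theorem k_two_six_not_marble_graph :
    ¬ ∃ (a b : EuclideanSpace ℝ (Fin 3)) (x : Fin 6 → EuclideanSpace ℝ (Fin 3)),
      (∀ i, ‖a - x i‖ = 1) ∧ (∀ i, ‖b - x i‖ = 1) ∧ 1 < ‖a - b‖ ∧
      (∀ i j, i ≠ j → 1 < ‖x i - x j‖) := by
  rintro ⟨a, b, x, ha, hb, hab, hx⟩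
  set m := midpoint ℝ a b
  have : Fact (finrank ℝ (EuclideanSpace ℝ (Fin 3)) = 2 + 1) := ⟨by simp⟩
  have hplane : finrank ℝ (ℝ ∙ (b - a))ᗮ = 2 :=
    Submodule.finrank_orthogonal_span_singleton <|
      sub_ne_zero.2 fun h => by simp [h] at hab; linarith
  have hmem : ∀ i, x i - m ∈ (ℝ ∙ (b - a))ᗮ := fun i =>
    (Submodule.mem_orthogonal_singleton_iff_inner_left).2 <|
      EuclideanGeometry.inner_vsub_vsub_of_dist_eq_of_dist_eq (c₁ := m)
        (by simp [m, dist_left_midpoint, dist_right_midpoint])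
        (by rw [dist_eq_norm, dist_eq_norm, ha, hb])
  have hsq : ∀ i, ‖x i - m‖ ^ 2 = 1 - ‖a - b‖ ^ 2 / 4 := fun i => by
    have := EuclideanGeometry.dist_sq_add_dist_sq_eq_two_mul_dist_midpoint_sq_add_half_dist_sq
      (x i) a b
    rw [dist_comm (x i) a, dist_comm (x i) b, dist_eq_norm, dist_eq_norm, dist_eq_norm,
      dist_eq_norm, ha, hb] at this
    linarith
  have hr : ∀ i, ‖x i - m‖ = ‖x 0 - m‖ := fun i =>
    (sq_eq_sq₀ (norm_nonneg _) (norm_nonneg _)).1 (by rw [hsq, hsq])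
  have hr1 : ‖x 0 - m‖ < 1 := by nlinarith [hsq 0, norm_nonneg (x 0 - m)]
  obtain ⟨i, j, hij, hle⟩ := exists_ne_norm_sub_le_of_finrank_eq_two hplane
    (fun i => ⟨x i - m, hmem i⟩) ‖x 0 - m‖ hr
  have : ‖x i - x j‖ ≤ ‖x 0 - m‖ := by simpa using hle
  linarith [hx i j hij]
end

section
/- There exist points a, b, x_1, …, x_5 in ℝ³ such that ‖a − x_i‖ = 1 and ‖b − x_i‖ = 1 for all i, ‖a − b‖ > 1, and ‖x_i − x_j‖ > 1 for all i ≠ j. Equivalently, the complete bipartite graph K_{2,5} is a marble graph. -/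
/-!
Put the five `x i` on a circle of radius `r` in the plane `z = 0` and `a, b = (0, 0, ±h)`
with `r² + h² = 1`; by Pythagoras every `x i` is then at distance `1` from `a` and `b`,
and `‖a - b‖ = 2h > 1` as soon as `r < √3/2`. A regular pentagon inscribed in that circle
has side `2 r sin 36° > 1` as soon as `r > 0.851`, so `(r, h) = (56/65, 33/65)` leaves room
for a pentagon with rational vertices.
-/

open scoped RealInnerProductSpace

section Bipyramid

variable {E : Type*} [NormedAddCommGroup E] [InnerProductSpace ℝ E]

theorem norm_sub_eq_one_of_inner_eq_zero {v x : E} (horth : ⟪v, x⟫ = 0)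
    (hnorm : ‖v‖ ^ 2 + ‖x‖ ^ 2 = 1) : ‖v - x‖ = 1 := by
  have h := norm_sub_sq_eq_norm_sq_add_norm_sq_real horth
  rw [← sq, ← sq, ← sq, hnorm] at h
  exact (pow_eq_one_iff_of_nonneg (norm_nonneg _) two_ne_zero).1 h

theorem bipyramid_edges {ι : Type*} {v : E} {x : ι → E} (horth : ∀ i, ⟪v, x i⟫ = 0)
    (hnorm : ∀ i, ‖v‖ ^ 2 + ‖x i‖ ^ 2 = 1) (hv : 1 < 2 * ‖v‖) :
    (∀ i, ‖v - x i‖ = 1) ∧ (∀ i, ‖-v - x i‖ = 1) ∧ 1 < ‖v - -v‖ := by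
  refine ⟨fun i ↦ norm_sub_eq_one_of_inner_eq_zero (horth i) (hnorm i),
    fun i ↦ norm_sub_eq_one_of_inner_eq_zero ?_ ?_, ?_⟩
  · rw [inner_neg_left, horth, neg_zero]
  · rw [norm_neg, hnorm]
  · rwa [sub_neg_eq_add, ← two_smul ℝ, norm_smul, Real.norm_two]

end Bipyramid

noncomputable def circlePoint (t : ℝ) : EuclideanSpace ℝ (Fin 3) :=
  !₂[(1 - t ^ 2) / (1 + t ^ 2), 2 * t / (1 + t ^ 2), 0]

theorem norm_circlePoint (t : ℝ) : ‖circlePoint t‖ = 1 := by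
  have : 0 < 1 + t ^ 2 := by positivity
  rw [← pow_eq_one_iff_of_nonneg (norm_nonneg _) two_ne_zero, EuclideanSpace.real_norm_sq_eq,
    Fin.sum_univ_three]
  simp only [circlePoint, Matrix.cons_val_zero, Matrix.cons_val_one, Matrix.cons_val, ne_eq,
    OfNat.ofNat_ne_zero, not_false_eq_true, zero_pow, add_zero]
  field_simp
  ring

theorem inner_vertical_circlePoint (t h : ℝ) : ⟪!₂[0, 0, h], circlePoint t⟫ = 0 := by
  simp [circlePoint, PiLp.inner_apply, Fin.sum_univ_three]

theorem norm_vertical (h : ℝ) : ‖!₂[0, 0, h]‖ = |h| := by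
  simp [EuclideanSpace.norm_eq, Fin.sum_univ_three, Real.sqrt_sq_eq_abs]

-- `circlePoint t` is at angle `2 arctan t`; the angles here are close to `0°, ±72°, ±144°`.
noncomputable def pentagon (i : Fin 5) : EuclideanSpace ℝ (Fin 3) :=
  (56 / 65 : ℝ) • circlePoint (![0, 8 / 11, 3, -3, -8 / 11] i)

theorem one_lt_norm_sub_pentagon {i j : Fin 5} (hij : i ≠ j) :
    1 < ‖pentagon i - pentagon j‖ := by
  rw [← one_lt_sq_iff₀ (norm_nonneg _), EuclideanSpace.real_norm_sq_eq, Fin.sum_univ_three]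
  fin_cases i <;> fin_cases j <;> first
    | exact absurd rfl hij
    | norm_num [pentagon, circlePoint, Matrix.cons_val_two]

/-- `K_{2,5}` is a marble graph: there exist points `a, b ∈ ℝ³` with `‖a - b‖ > 1`
together with 5 points `x i` at distance exactly 1 from both `a` and `b` that are
pairwise at distance greater than 1. -/
theorem k_two_five_marble_graph :
    ∃ (a b : EuclideanSpace ℝ (Fin 3)) (x : Fin 5 → EuclideanSpace ℝ (Fin 3)),
      (∀ i, ‖a - x i‖ = 1) ∧ (∀ i, ‖b - x i‖ = 1) ∧ 1 < ‖a - b‖ ∧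
      (∀ i j, i ≠ j → 1 < ‖x i - x j‖) := by
  let v : EuclideanSpace ℝ (Fin 3) := !₂[0, 0, 33 / 65]
  have hv : ‖v‖ = 33 / 65 := by rw [norm_vertical]; norm_num
  have horth : ∀ i, ⟪v, pentagon i⟫ = 0 := fun i ↦ by
    rw [pentagon, inner_smul_right, inner_vertical_circlePoint, mul_zero]
  have hnorm : ∀ i, ‖v‖ ^ 2 + ‖pentagon i‖ ^ 2 = 1 := fun i ↦ by
    rw [hv, pentagon, norm_smul, norm_circlePoint]
    norm_num
  obtain ⟨hva, hvb, hab⟩ := bipyramid_edges horth hnorm (by rw [hv]; norm_num)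
  exact ⟨v, -v, pentagon, hva, hvb, hab, fun _ _ ↦ one_lt_norm_sub_pentagon⟩
end

section
/- Let 0 < ε ≤ 1 − √(2(1 − cos(2π/7))). There do not exist points p_0, p_1, …, p_7 in ℝ² and radii r_0, r_1, …, r_7 with r_i ∈ (1−ε, 1+ε) for all i, such that ‖p_i − p_j‖ ≥ r_i + r_j for all i ≠ j, and ‖p_0 − p_i‖ = r_0 + r_i for all i ∈ {1,…,7}. Consequently, the maximum degree in an ε-interval radii penny graph is at most 6. -/
/-!
Let `δ = 2π/7` and `s = √(2(1 - cos δ))`, the chord of the unit circle subtending `δ`.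
If discs of radii `rb`, `rc` touch a disc of radius `ra` centred at `a` and do not overlap, the
law of cosines shows that they subtend an angle larger than `δ` at `a` as soon as
`s²(ra + rb)(ra + rc) < 4 rb rc`, and this follows from `s ≤ 1 - ε` because each factor
satisfies `s (ra + rb) < 2 rb`. On the other hand, seven directions in the plane cannot have
pairwise angles larger than `2π/7`: measure their oriented angles from the first one and cut
the circle into seven arcs of length `2π/7`; either two directions share an arc, or one of
them lies in the last arc, within `2π/7` of the first.
-/

open Real Set Module EuclideanGeometry InnerProductGeometry

theorem Real.two_mul_pi_div_le_pi {n : ℕ} (hn : 2 ≤ n) : 2 * π / n ≤ π := by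
  have hn' : (2 : ℝ) ≤ n := by exact_mod_cast hn
  rw [div_le_iff₀ (by positivity)]
  nlinarith [pi_pos]

theorem Real.cos_le_cos_of_abs_le {x δ : ℝ} (hx : |x| ≤ δ) (hδ : δ ≤ π) : cos δ ≤ cos x := by
  rw [← cos_abs x]
  exact cos_le_cos_of_nonneg_of_le_pi (abs_nonneg x) hδ hx

theorem Real.exists_ne_cos_two_pi_div_le_cos_sub {n : ℕ} (hn : 2 ≤ n) {θ : Fin n → ℝ}
    (i₀ : Fin n) (hθ : ∀ i, θ i ∈ Ico (θ i₀) (θ i₀ + 2 * π)) :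
    ∃ i j, i ≠ j ∧ cos (2 * π / n) ≤ cos (θ i - θ j) := by
  have hδπ := two_mul_pi_div_le_pi hn
  obtain ⟨m, rfl⟩ := Nat.exists_eq_add_of_le' hn
  set δ := 2 * π / ↑(m + 2)
  have hδ : 0 < δ := by positivity
  have hmδ : ((m + 1 : ℕ) + 1 : ℝ) * δ = 2 * π := by
    simp only [δ]; push_cast; field_simp; ring
  have hoff : ∀ i, 0 ≤ (θ i - θ i₀) / δ := fun i => div_nonneg (by linarith [(hθ i).1]) hδ.le
  let bin i : Fin (m + 2) := ⟨⌊(θ i - θ i₀) / δ⌋₊, (Nat.floor_lt (hoff i)).2 <| by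
    rw [div_lt_iff₀ hδ]; push_cast at hmδ ⊢; linarith [(hθ i).2]⟩
  have hbin_le : ∀ i, (bin i : ℝ) * δ ≤ θ i - θ i₀ := fun i =>
    (le_div_iff₀ hδ).1 (Nat.floor_le (hoff i))
  have hbin_lt : ∀ i, θ i - θ i₀ < ((bin i : ℝ) + 1) * δ := fun i =>
    (div_lt_iff₀ hδ).1 (Nat.lt_floor_add_one _)
  by_cases hinj : Function.Injective bin
  · obtain ⟨i, hi⟩ := (Finite.injective_iff_surjective.1 hinj) (Fin.last (m + 1))
    have hbin₀ : bin i₀ = 0 := by ext; simp [bin]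
    refine ⟨i, i₀, fun h => by simp [h, hbin₀] at hi, ?_⟩
    rw [← cos_two_pi_sub (θ i - θ i₀)]
    refine cos_le_cos_of_abs_le (abs_le.2 ⟨?_, ?_⟩) hδπ
    · linarith [(hθ i).2]
    · have := hbin_le i
      rw [hi, Fin.val_last] at this
      linarith
  · obtain ⟨i, j, hij, hne⟩ : ∃ i j, bin i = bin j ∧ i ≠ j := by
      simpa [Function.Injective] using hinj
    refine ⟨i, j, hne, cos_le_cos_of_abs_le (abs_le.2 ⟨?_, ?_⟩) hδπ⟩ <;>
    · have := hbin_le i; have := hbin_le j; have := hbin_lt i; have := hbin_lt j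
      rw [hij] at *
      nlinarith

theorem Real.Angle.exists_ne_cos_two_pi_div_le_cos_sub {n : ℕ} (hn : 2 ≤ n)
    (θ : Fin n → Real.Angle) : ∃ i j, i ≠ j ∧ Real.cos (2 * π / n) ≤ (θ i - θ j).cos := by
  let i₀ : Fin n := ⟨0, by omega⟩
  let t i := toIcoMod two_pi_pos (θ i₀).toReal (θ i).toReal
  have ht₀ : t i₀ = (θ i₀).toReal := toIcoMod_apply_left _ _
  have hθt : ∀ i, θ i = t i := fun i => by simp [t, Angle.coe_toIcoMod]
  obtain ⟨i, j, hij, hcos⟩ := Real.exists_ne_cos_two_pi_div_le_cos_sub hn i₀ (θ := t)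
    (fun i => ht₀ ▸ toIcoMod_mem_Ico _ _ _)
  exact ⟨i, j, hij, by rwa [hθt i, hθt j, ← Angle.coe_sub, Angle.cos_coe]⟩

theorem InnerProductGeometry.exists_ne_angle_le_two_pi_div {V : Type*} [NormedAddCommGroup V]
    [InnerProductSpace ℝ V] [Fact (finrank ℝ V = 2)] {n : ℕ} (hn : 2 ≤ n) (v : Fin n → V)
    (hv : ∀ i, v i ≠ 0) : ∃ i j, i ≠ j ∧ angle (v i) (v j) ≤ 2 * π / n := by
  have := FiniteDimensional.of_fact_finrank_eq_two (K := ℝ) (V := V)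
  let o : Orientation ℝ V (Fin 2) := (finBasisOfFinrankEq ℝ V Fact.out).orientation
  obtain ⟨i, j, hij, hcos⟩ :=
    Angle.exists_ne_cos_two_pi_div_le_cos_sub hn fun i => o.oangle (v ⟨0, by omega⟩) (v i)
  refine ⟨j, i, hij.symm, ?_⟩
  rw [o.oangle_sub_left (hv _) (hv _) (hv _), o.cos_oangle_eq_cos_angle (hv _) (hv _)] at hcos
  exact (strictAntiOn_cos.le_iff_ge ⟨by positivity, two_mul_pi_div_le_pi hn⟩
    ⟨angle_nonneg _ _, angle_le_pi _ _⟩).1 hcos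

theorem EuclideanGeometry.exists_ne_angle_le_two_pi_div {V P : Type*} [NormedAddCommGroup V]
    [InnerProductSpace ℝ V] [MetricSpace P] [NormedAddTorsor V P] [Fact (finrank ℝ V = 2)]
    {n : ℕ} (hn : 2 ≤ n) (p : Fin n → P) (c : P) (hp : ∀ i, p i ≠ c) :
    ∃ i j, i ≠ j ∧ ∠ (p i) c (p j) ≤ 2 * π / n :=
  InnerProductGeometry.exists_ne_angle_le_two_pi_div hn _ fun i => vsub_ne_zero.2 (hp i)

theorem mul_add_lt_two_mul_of_mem_Ioo {ε c ra rb : ℝ} (hc₀ : 0 ≤ c) (hc : c ≤ 1 - ε)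
    (ha : ra ∈ Ioo (1 - ε) (1 + ε)) (hb : 1 - ε < rb) : c * (ra + rb) < 2 * rb := by
  obtain ⟨ha₁, ha₂⟩ := ha
  nlinarith [mul_le_mul_of_nonneg_right hc (by linarith : 0 ≤ ra + rb)]

theorem EuclideanGeometry.lt_angle_of_dist_eq_add {V P : Type*} [NormedAddCommGroup V]
    [InnerProductSpace ℝ V] [MetricSpace P] [NormedAddTorsor V P] {ε δ ra rb rc : ℝ}
    {a b c : P} (hδ : δ ≤ π) (hδε : √(2 * (1 - cos δ)) ≤ 1 - ε)
    (ha : ra ∈ Ioo (1 - ε) (1 + ε)) (hb : 1 - ε < rb) (hc : 1 - ε < rc)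
    (hab : dist a b = ra + rb) (hac : dist a c = ra + rc)
    (hbc : rb + rc ≤ dist b c) : δ < ∠ b a c := by
  set s := √(2 * (1 - cos δ))
  have hs : s ^ 2 = 2 * (1 - cos δ) := sq_sqrt (by linarith [cos_le_one δ])
  have hsb := mul_add_lt_two_mul_of_mem_Ioo (sqrt_nonneg _) hδε ha hb
  have hsc := mul_add_lt_two_mul_of_mem_Ioo (sqrt_nonneg _) hδε ha hc
  have ha₁ := ha.1
  have hε : 0 ≤ 1 - ε := (sqrt_nonneg _).trans hδε
  have hchord : s ^ 2 * ((ra + rb) * (ra + rc)) < 4 * (rb * rc) := by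
    nlinarith [mul_lt_mul'' hsb hsc (mul_nonneg (sqrt_nonneg _) (by linarith))
      (mul_nonneg (sqrt_nonneg _) (by linarith))]
  have hcos : cos (∠ b a c) < cos δ := by
    have hlaw := law_cos b a c
    rw [dist_comm b a, dist_comm c a, hab, hac] at hlaw
    have hAB : 0 < 2 * ((ra + rb) * (ra + rc)) := by nlinarith
    refine lt_of_mul_lt_mul_left ?_ hAB.le
    nlinarith [mul_self_le_mul_self (by linarith) hbc]
  by_contra! h
  exact hcos.not_ge (cos_le_cos_of_nonneg_of_le_pi (angle_nonneg _ _ _) hδ h)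

theorem interval_radii_penny_max_degree_general (ε : ℝ)
    (hε' : ε ≤ 1 - Real.sqrt (2 * (1 - Real.cos (2 * Real.pi / 7)))) :
    ¬ ∃ (p : Fin 8 → EuclideanSpace ℝ (Fin 2)) (r : Fin 8 → ℝ),
      (∀ i, r i ∈ Set.Ioo (1 - ε) (1 + ε)) ∧
      (∀ i j, i ≠ j → r i + r j ≤ ‖p i - p j‖) ∧
      (∀ i, i ≠ 0 → ‖p 0 - p i‖ = r 0 + r i) := by
  rintro ⟨p, r, hr, hsep, htouch⟩
  simp only [← dist_eq_norm] at hsep htouch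
  have : Fact (finrank ℝ (EuclideanSpace ℝ (Fin 2)) = 2) := ⟨finrank_euclideanSpace_fin⟩
  have hδπ : 2 * π / 7 ≤ π := by linarith [pi_pos]
  have hgap (i j : Fin 7) (hij : i ≠ j) : 2 * π / 7 < ∠ (p i.succ) (p 0) (p j.succ) :=
    lt_angle_of_dist_eq_add hδπ (by linarith) (hr 0) (hr _).1 (hr _).1
      (htouch _ i.succ_ne_zero) (htouch _ j.succ_ne_zero) (hsep _ _ (Fin.succ_inj.not.2 hij))
  have hne (i : Fin 7) : p i.succ ≠ p 0 := fun h => by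
    have := hsep _ _ i.succ_ne_zero
    rw [h, dist_self] at this
    linarith [(hr 0).1, (hr i.succ).1, sqrt_nonneg (2 * (1 - cos (2 * π / 7)))]
  obtain ⟨i, j, hij, hle⟩ := exists_ne_angle_le_two_pi_div (by norm_num) _ _ hne
  exact (hgap i j hij).not_ge (by exact_mod_cast hle)

/-- For `0 < ε ≤ 1 - √(2(1 - cos(2π/7)))`, there is no configuration of 8 pennies with
radii in `(1-ε, 1+ε)`, pairwise disjoint interiors, in which the penny `p 0` touches all
7 others. Consequently the maximum degree in an `ε`-interval radii penny graph is at
most 6. -/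
theorem interval_radii_penny_max_degree (ε : ℝ) (hε : 0 < ε)
    (hε' : ε ≤ 1 - Real.sqrt (2 * (1 - Real.cos (2 * Real.pi / 7)))) :
    ¬ ∃ (p : Fin 8 → EuclideanSpace ℝ (Fin 2)) (r : Fin 8 → ℝ),
      (∀ i, r i ∈ Set.Ioo (1 - ε) (1 + ε)) ∧
      (∀ i j, i ≠ j → r i + r j ≤ ‖p i - p j‖) ∧
      (∀ i, i ≠ 0 → ‖p 0 - p i‖ = r 0 + r i) :=
  interval_radii_penny_max_degree_general ε hε'
end

section
/- Let p_0, p_1, p_2, p_3 ∈ ℝ² and r_0, r_1, r_2, r_3 > 0 satisfy ‖p_i − p_j‖ ≥ r_i + r_j for all 0 ≤ i < j ≤ 3 (the four discs of radius r_i centred at p_i have pairwise disjoint interiors), and ‖p_i − p_j‖ = r_i + r_j for all 1 ≤ i < j ≤ 3 (the discs P_1, P_2, P_3 are pairwise in contact). If p_0 lies in the interior of the triangle with vertices p_1, p_2, p_3 (that is, p_0 lies in the topological interior of the convex hull of {p_1, p_2, p_3}), then 3 + 2√3 ≤ max{ r_1/r_0, r_2/r_0, r_3/r_0 }. -/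
open scoped RealInnerProductSpace

private lemma normsq_comb {F : Type*} [NormedAddCommGroup F] [InnerProductSpace ℝ F]
    (A B : F) (x y : ℝ) :
    ‖x • A + y • B‖ ^ 2 =
      x ^ 2 * ‖A‖ ^ 2 + 2 * (x * y) * ⟪A, B⟫ + y ^ 2 * ‖B‖ ^ 2 := by
  rw [norm_add_sq_real, real_inner_smul_left, real_inner_smul_right, norm_smul, norm_smul]
  simp only [Real.norm_eq_abs, mul_pow, sq_abs]
  ring

/-- Any point of the convex hull of three points is, for at least one `i`, no farther
from `pᵢ` than an arbitrary point `q` is. -/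
private lemma exists_close {F : Type*} [NormedAddCommGroup F] [InnerProductSpace ℝ F]
    (p₁ p₂ p₃ x q : F) (hx : x ∈ convexHull ℝ {p₁, p₂, p₃}) :
    ‖x - p₁‖ ≤ ‖q - p₁‖ ∨ ‖x - p₂‖ ≤ ‖q - p₂‖ ∨ ‖x - p₃‖ ≤ ‖q - p₃‖ := by
  by_contra hc
  push_neg at hc
  obtain ⟨h1, h2, h3⟩ := hc
  have hlin : IsLinearMap ℝ (fun y : F => 2 * ⟪q - x, y⟫) := by
    constructor
    · intro a b; rw [inner_add_right]; ring
    · intro c a; rw [inner_smul_right]; simp [smul_eq_mul]; ring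
  have hconv : Convex ℝ {y : F | ‖q‖ ^ 2 - ‖x‖ ^ 2 < 2 * ⟪q - x, y⟫} :=
    convex_halfSpace_gt hlin _
  have hmem : ∀ z : F, ‖q - z‖ < ‖x - z‖ → z ∈ {y : F | ‖q‖ ^ 2 - ‖x‖ ^ 2 < 2 * ⟪q - x, y⟫} := by
    intro z hz
    have hsq : ‖q - z‖ ^ 2 < ‖x - z‖ ^ 2 := by
      have h0 : 0 ≤ ‖q - z‖ := norm_nonneg _
      nlinarith [norm_nonneg (x - z)]
    have e1 := norm_sub_sq_real q z
    have e2 := norm_sub_sq_real x z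
    have : ‖q‖ ^ 2 - ‖x‖ ^ 2 < 2 * (⟪q, z⟫ - ⟪x, z⟫) := by linarith
    simpa [Set.mem_setOf_eq, inner_sub_left] using this
  have hsub : convexHull ℝ {p₁, p₂, p₃} ⊆ {y : F | ‖q‖ ^ 2 - ‖x‖ ^ 2 < 2 * ⟪q - x, y⟫} := by
    apply convexHull_min _ hconv
    rintro y (rfl | rfl | rfl)
    · exact hmem _ h1
    · exact hmem _ h2
    · exact hmem _ h3
  have hxin := hsub hx
  simp only [Set.mem_setOf_eq, inner_sub_left] at hxin
  have e3 := norm_sub_sq_real q x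
  have e4 : ⟪x, x⟫ = ‖x‖ ^ 2 := real_inner_self_eq_norm_sq x
  nlinarith [sq_nonneg ‖q - x‖, norm_nonneg (q - x)]

set_option maxHeartbeats 2000000 in
/-- If four discs in `ℝ²` have pairwise disjoint interiors, the discs `P₁, P₂, P₃` are
pairwise in contact and the centre `p 0` of `P₀` lies in the interior of the triangle
formed by the centres `p 1, p 2, p 3`, then `3 + 2√3 ≤ max { r i / r 0 : i = 1, 2, 3 }`. -/
theorem point_in_middle (p : Fin 4 → EuclideanSpace ℝ (Fin 2)) (r : Fin 4 → ℝ)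
    (hr : ∀ i, 0 < r i)
    (hdisj : ∀ i j, i ≠ j → r i + r j ≤ ‖p i - p j‖)
    (hcontact : ∀ i j, i ≠ j → i ≠ 0 → j ≠ 0 → ‖p i - p j‖ = r i + r j)
    (hin : p 0 ∈ interior (convexHull ℝ {p 1, p 2, p 3})) :
    3 + 2 * Real.sqrt 3 ≤ max (r 1 / r 0) (max (r 2 / r 0) (r 3 / r 0)) := by
  have hr0 : (0:ℝ) < r 0 := hr 0
  have hr1 : (0:ℝ) < r 1 := hr 1
  have hr2 : (0:ℝ) < r 2 := hr 2
  have hr3 : (0:ℝ) < r 3 := hr 3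
  have h01 : r 0 + r 1 ≤ ‖p 0 - p 1‖ := hdisj 0 1 (by decide)
  have h02 : r 0 + r 2 ≤ ‖p 0 - p 2‖ := hdisj 0 2 (by decide)
  have h03 : r 0 + r 3 ≤ ‖p 0 - p 3‖ := hdisj 0 3 (by decide)
  have h21 : ‖p 2 - p 1‖ = r 2 + r 1 := hcontact 2 1 (by decide) (by decide) (by decide)
  have h31 : ‖p 3 - p 1‖ = r 3 + r 1 := hcontact 3 1 (by decide) (by decide) (by decide)
  have h23 : ‖p 2 - p 3‖ = r 2 + r 3 := hcontact 2 3 (by decide) (by decide) (by decide)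
  have hp0 : p 0 ∈ convexHull ℝ {p 1, p 2, p 3} := interior_subset hin
  set r0 := r 0 with hr0def
  set r1 := r 1 with hr1def
  set r2 := r 2 with hr2def
  set r3 := r 3 with hr3def
  set x := p 0 with hxdef
  set A := p 2 - p 1 with hAdef
  set B := p 3 - p 1 with hBdef
  clear_value r0 r1 r2 r3 x A B
  have hAB : A - B = p 2 - p 3 := by rw [hAdef, hBdef]; abel
  have hD : ⟪A, B⟫ = r1 ^ 2 + r1 * r2 + r1 * r3 - r2 * r3 := by
    have h := norm_sub_sq_real A B
    rw [hAB, h23, h21, h31] at h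
    linear_combination (1/2 : ℝ) * h
  set E := Real.sqrt (r1 * r2 * r3 * (r1 + r2 + r3)) with hEdef
  have hE : E ^ 2 = r1 * r2 * r3 * (r1 + r2 + r3) := by
    rw [hEdef]; exact Real.sq_sqrt (by positivity)
  have hEnn : 0 ≤ E := hEdef ▸ Real.sqrt_nonneg _
  set W := 2 * (r1 * r2 * r3) * (r1 + r2 + r3) + (r1 * r2 + r2 * r3 + r3 * r1) * E with hWdef
  set g2 := r1 * r2 * r3 * (r1 + r3) + r1 * r3 * E with hg2def
  set g3 := r1 * r2 * r3 * (r1 + r2) + r1 * r2 * E with hg3def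
  set N := r1 * r2 + r2 * r3 + r3 * r1 + 2 * E with hNdef
  clear_value E W g2 g3 N
  have hWpos : 0 < W := by
    rw [hWdef]
    have ha : 0 < 2 * (r1 * r2 * r3) * (r1 + r2 + r3) := by positivity
    have hb : 0 ≤ (r1 * r2 + r2 * r3 + r3 * r1) * E := by positivity
    linarith
  have hNpos : 0 < N := by
    rw [hNdef]
    have ha : 0 < r1 * r2 + r2 * r3 + r3 * r1 := by positivity
    linarith
  have hW0 : W ≠ 0 := ne_of_gt hWpos
  set q := p 1 + W⁻¹ • (g2 • A + g3 • B) with hqdef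
  clear_value q
  -- the three cleared Soddy-distance identities
  have key1 : (r1 * r2 * r3 + r1 * N) ^ 2 * W ^ 2 =
      (g2 ^ 2 * (r2 + r1) ^ 2 + 2 * (g2 * g3) * (r1 ^ 2 + r1 * r2 + r1 * r3 - r2 * r3)
        + g3 ^ 2 * (r3 + r1) ^ 2) * N ^ 2 := by
    rw [hWdef, hg2def, hg3def, hNdef]
    linear_combination ((4:ℝ)*r1^2*r2^2*r3^2*E^2 + (8:ℝ)*r1^2*r2^3*r3^3*E + (4:ℝ)*r1^2*r2^4*r3^4 + (-8:ℝ)*r1^3*r2*r3^2*E^2 + (-8:ℝ)*r1^3*r2^2*r3*E^2 + (-12:ℝ)*r1^3*r2^2*r3^3*E + (-12:ℝ)*r1^3*r2^3*r3^2*E + (-4:ℝ)*r1^3*r2^3*r3^4 + (-4:ℝ)*r1^3*r2^4*r3^3 + (-4:ℝ)*r1^4*r2*r3^3*E + (-24:ℝ)*r1^4*r2^2*r3^2*E + (-4:ℝ)*r1^4*r2^2*r3^4 + (-4:ℝ)*r1^4*r2^3*r3*E + (-20:ℝ)*r1^4*r2^3*r3^3 + (-4:ℝ)*r1^4*r2^4*r3^2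 + (-8:ℝ)*r1^5*r2^2*r3^3 + (-8:ℝ)*r1^5*r2^3*r3^2) * hE
  have key2 : (r1 * r2 * r3 + r2 * N) ^ 2 * W ^ 2 =
      ((g2 - W) ^ 2 * (r2 + r1) ^ 2 + 2 * ((g2 - W) * g3) * (r1 ^ 2 + r1 * r2 + r1 * r3 - r2 * r3)
        + g3 ^ 2 * (r3 + r1) ^ 2) * N ^ 2 := by
    rw [hWdef, hg2def, hg3def, hNdef]
    linear_combination ((-8:ℝ)*r1*r2^3*r3^2*E^2 + (-4:ℝ)*r1*r2^4*r3^3*E + (4:ℝ)*r1^2*r2^2*r3^2*E^2 + (-8:ℝ)*r1^2*r2^3*r3*E^2 + (-12:ℝ)*r1^2*r2^3*r3^3*E + (-24:ℝ)*r1^2*r2^4*r3^2*E + (-4:ℝ)*r1^2*r2^4*r3^4 + (-8:ℝ)*r1^2*r2^5*r3^3 + (8:ℝ)*r1^3*r2^2*r3^3*E + (-12:ℝ)*r1^3*r2^3*r3^2*E + (-4:ℝ)*r1^3*r2^3*r3^4 + (-4:ℝ)*r1^3*r2^4*r3*E + (-20:ℝ)*r1^3*r2^4*r3^3 + (-8:ℝ)*r1^3*r2^5*r3^2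 + (4:ℝ)*r1^4*r2^2*r3^4 + (-4:ℝ)*r1^4*r2^3*r3^3 + (-4:ℝ)*r1^4*r2^4*r3^2) * hE
  have key3 : (r1 * r2 * r3 + r3 * N) ^ 2 * W ^ 2 =
      (g2 ^ 2 * (r2 + r1) ^ 2 + 2 * (g2 * (g3 - W)) * (r1 ^ 2 + r1 * r2 + r1 * r3 - r2 * r3)
        + (g3 - W) ^ 2 * (r3 + r1) ^ 2) * N ^ 2 := by
    rw [hWdef, hg2def, hg3def, hNdef]
    linear_combination ((-8:ℝ)*r1*r2^2*r3^3*E^2 + (-4:ℝ)*r1*r2^3*r3^4*E + (-8:ℝ)*r1^2*r2*r3^3*E^2 + (4:ℝ)*r1^2*r2^2*r3^2*E^2 + (-24:ℝ)*r1^2*r2^2*r3^4*E + (-12:ℝ)*r1^2*r2^3*r3^3*E + (-8:ℝ)*r1^2*r2^3*r3^5 + (-4:ℝ)*r1^2*r2^4*r3^4 + (-4:ℝ)*r1^3*r2*r3^4*E + (-12:ℝ)*r1^3*r2^2*r3^3*E + (-8:ℝ)*r1^3*r2^2*r3^5 + (8:ℝ)*r1^3*r2^3*r3^2*E + (-20:ℝ)*r1^3*r2^3*r3^4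 + (-4:ℝ)*r1^3*r2^4*r3^3 + (-4:ℝ)*r1^4*r2^2*r3^4 + (-4:ℝ)*r1^4*r2^3*r3^3 + (4:ℝ)*r1^4*r2^4*r3^2) * hE
  have ev1 : W • (q - p 1) = g2 • A + g3 • B := by
    rw [hqdef, add_sub_cancel_left, smul_inv_smul₀ hW0]
  have ev2 : W • (q - p 2) = (g2 - W) • A + g3 • B := by
    have h : q - p 2 = W⁻¹ • (g2 • A + g3 • B) - A := by
      rw [hqdef, hAdef]; abel
    rw [h, smul_sub, smul_inv_smul₀ hW0]; module
  have ev3 : W • (q - p 3) = g2 • A + (g3 - W) • B := by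
    have h : q - p 3 = W⁻¹ • (g2 • A + g3 • B) - B := by
      rw [hqdef, hBdef]; abel
    rw [h, smul_sub, smul_inv_smul₀ hW0]; module
  -- generic step: from a coefficient representation and a cleared key identity,
  -- derive the exact distance value
  have hsqgen : ∀ (z : EuclideanSpace ℝ (Fin 2)) (cA cB ri : ℝ), 0 < ri →
      W • z = cA • A + cB • B →
      (r1 * r2 * r3 + ri * N) ^ 2 * W ^ 2 =
        (cA ^ 2 * (r2 + r1) ^ 2 + 2 * (cA * cB) * (r1 ^ 2 + r1 * r2 + r1 * r3 - r2 * r3)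
          + cB ^ 2 * (r3 + r1) ^ 2) * N ^ 2 →
      ‖z‖ * (W * N) = (r1 * r2 * r3 + ri * N) * W := by
    intro z cA cB ri hri hv hkey
    have e4 : W ^ 2 * ‖z‖ ^ 2 =
        cA ^ 2 * (r2 + r1) ^ 2 + 2 * (cA * cB) * (r1 ^ 2 + r1 * r2 + r1 * r3 - r2 * r3)
          + cB ^ 2 * (r3 + r1) ^ 2 := by
      have e5 : ‖W • z‖ ^ 2 = W ^ 2 * ‖z‖ ^ 2 := by
        rw [norm_smul, Real.norm_eq_abs, mul_pow, sq_abs]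
      rw [← e5, hv, normsq_comb, h21, h31, hD]
    have hsq : (‖z‖ * (W * N)) ^ 2 = ((r1 * r2 * r3 + ri * N) * W) ^ 2 := by
      linear_combination N ^ 2 * e4 - hkey
    have hposR : 0 < (r1 * r2 * r3 + ri * N) * W := by
      have ha : 0 < r1 * r2 * r3 := by positivity
      have hb : 0 < ri * N := mul_pos hri hNpos
      exact mul_pos (by linarith) hWpos
    have hfac : (‖z‖ * (W * N) - (r1 * r2 * r3 + ri * N) * W)
        * (‖z‖ * (W * N) + (r1 * r2 * r3 + ri * N) * W) = 0 := by
      linear_combination hsq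
    rcases mul_eq_zero.mp hfac with h' | h'
    · linarith
    · exfalso
      have hz0 : 0 ≤ ‖z‖ * (W * N) := mul_nonneg (norm_nonneg _) (mul_pos hWpos hNpos).le
      linarith
  have hval1 := hsqgen (q - p 1) g2 g3 r1 hr1 ev1 key1
  have hval2 := hsqgen (q - p 2) (g2 - W) g3 r2 hr2 ev2 key2
  have hval3 := hsqgen (q - p 3) g2 (g3 - W) r3 hr3 ev3 key3
  -- some distance from x to a centre is at most that from q
  have main := exists_close (p 1) (p 2) (p 3) x q hp0
  have hr0N : r0 * N ≤ r1 * r2 * r3 := by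
    have step : ∀ (i : Fin 4) (ri : ℝ), r0 + ri ≤ ‖x - p i‖ → ‖x - p i‖ ≤ ‖q - p i‖ →
        ‖q - p i‖ * (W * N) = (r1 * r2 * r3 + ri * N) * W → r0 * N ≤ r1 * r2 * r3 := by
      intro i ri hd hle hv
      have hchain : (r0 + ri) * (W * N) ≤ (r1 * r2 * r3 + ri * N) * W := by
        rw [← hv]
        exact mul_le_mul_of_nonneg_right (le_trans hd hle) (mul_pos hWpos hNpos).le
      have h' : r0 * N * W ≤ r1 * r2 * r3 * W := by nlinarith [hchain]
      exact le_of_mul_le_mul_right h' hWpos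
    rcases main with h | h | h
    · exact step 1 r1 h01 h hval1
    · exact step 2 r2 h02 h hval2
    · exact step 3 r3 h03 h hval3
  clear hsqgen hval1 hval2 hval3 key1 key2 key3 ev1 ev2 ev3 main hqdef q hD hAB
  clear h21 h31 h23 h01 h02 h03 hp0 hin hxdef x hAdef hBdef A B
  clear hWdef hg2def hg3def hW0 hWpos W g2 g3 hdisj hcontact hr p hr0def hr1def hr2def hr3def
  -- Descartes-style estimate
  set m := max r1 (max r2 r3) with hmdef
  clear_value m
  have hm1 : r1 ≤ m := by rw [hmdef]; exact le_max_left _ _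
  have hm2 : r2 ≤ m := by rw [hmdef]; exact le_trans (le_max_left _ _) (le_max_right _ _)
  have hm3 : r3 ≤ m := by rw [hmdef]; exact le_trans (le_max_right _ _) (le_max_right _ _)
  have hmpos : 0 < m := lt_of_lt_of_le hr1 hm1
  have h3a : 3 * (r1 * r2 * r3) ≤ m * (r1 * r2 + r2 * r3 + r3 * r1) := by
    nlinarith [mul_nonneg (mul_nonneg (sub_nonneg.2 hm1) hr2.le) hr3.le,
      mul_nonneg (mul_nonneg (sub_nonneg.2 hm2) hr3.le) hr1.le,
      mul_nonneg (mul_nonneg (sub_nonneg.2 hm3) hr1.le) hr2.le]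
  have h3b : Real.sqrt 3 * (r1 * r2 * r3) ≤ m * E := by
    have ha : Real.sqrt 3 * (r1 * r2 * r3) = Real.sqrt (3 * (r1 * r2 * r3) ^ 2) := by
      rw [Real.sqrt_mul (by norm_num : (0:ℝ) ≤ 3), Real.sqrt_sq (by positivity)]
    have hb : m * E = Real.sqrt (m ^ 2 * (r1 * r2 * r3 * (r1 + r2 + r3))) := by
      rw [Real.sqrt_mul (sq_nonneg m), Real.sqrt_sq hmpos.le, hEdef]
    rw [ha, hb]
    apply Real.sqrt_le_sqrt
    nlinarith [mul_nonneg (mul_nonneg (sub_nonneg.2 (mul_le_mul hm2 hm3 hr3.le hmpos.le)) hr1.le)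
        (mul_pos (mul_pos hr1 hr2) hr3).le,
      mul_nonneg (mul_nonneg (sub_nonneg.2 (mul_le_mul hm1 hm3 hr3.le hmpos.le)) hr2.le)
        (mul_pos (mul_pos hr1 hr2) hr3).le,
      mul_nonneg (mul_nonneg (sub_nonneg.2 (mul_le_mul hm1 hm2 hr2.le hmpos.le)) hr3.le)
        (mul_pos (mul_pos hr1 hr2) hr3).le]
  have hDes : (3 + 2 * Real.sqrt 3) * (r1 * r2 * r3) ≤ m * N := by
    rw [hNdef]
    nlinarith [h3a, h3b]
  have hsqrt3 : (0:ℝ) ≤ Real.sqrt 3 := Real.sqrt_nonneg 3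
  have hfin : (3 + 2 * Real.sqrt 3) * r0 ≤ m := by
    have h1 : (3 + 2 * Real.sqrt 3) * (r0 * N) ≤ (3 + 2 * Real.sqrt 3) * (r1 * r2 * r3) :=
      mul_le_mul_of_nonneg_left hr0N (by linarith)
    have h2 : (3 + 2 * Real.sqrt 3) * r0 * N ≤ m * N := by nlinarith [h1, hDes]
    exact le_of_mul_le_mul_right h2 hNpos
  have hmax : max (r1 / r0) (max (r2 / r0) (r3 / r0)) = m / r0 := by
    rw [hmdef, max_div_div_right hr0.le, max_div_div_right hr0.le]
  rw [hmax, le_div_iff₀ hr0]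
  exact hfin
end

section
/- Let 0 < ε ≤ √3 − 1. There do not exist points p_x, p_y, p_a, p_b, p_c in ℝ² and radii r_x, r_y, r_a, r_b, r_c ∈ (1−ε, 1+ε) such that ‖p_u − p_v‖ ≥ r_u + r_v for all distinct u, v ∈ {x,y,a,b,c}, ‖p_x − p_y‖ = r_x + r_y, and ‖p_x − p_i‖ = r_x + r_i and ‖p_y − p_i‖ = r_y + r_i for each i ∈ {a,b,c}. Consequently, in an ε-interval radii penny graph, any pair of adjacent vertices has at most two common neighbours. -/
lemma quad_aux (c n p : ℝ) (hc : c^2 = 3) (hc1 : 1 < c) (hc2 : c < 2)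
    (hn : 2 - c < n) (hn' : n < c) (h2n : 2*n ≤ p)
    (hpl : p*(2-c) < n^2 + (2-c)^2) (hpc : p*c < n^2 + 3) :
    c*(p^2 - 4*n^2) < 4*p*n^2 := by
  have hn0 : 0 < n := by linarith
  have hl0 : 0 < 2 - c := by linarith
  have hV : 0 ≤ p - 2*n := by linarith
  have hcc3 : c^2 - 3 = 0 := by rw [hc]; ring
  by_contra hcon
  push_neg at hcon
  have hq : 0 ≤ c*(p^2 - 4*n^2) - 4*p*n^2 := by linarith
  rcases le_total (n^2) (2*c-3) with hw | hw
  · -- small case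
    have hU : 0 < n^2 + (2-c)^2 - p*(2-c) := by linarith
    have hS : 0 ≤ (n^2 + (2-c)^2 - p*(2-c)) + (p - 2*n)*(2-c) := by
      have := mul_nonneg hV hl0.le
      linarith
    have hlcw : 0 ≤ (2-c)*c - n^2 := by nlinarith
    have h85 : 0 < 5*c - 8 := by nlinarith
    have hwl2 : 0 ≤ n^2 - (2-c)^2 := by nlinarith
    have F1 : 0 ≤ (c*(p^2 - 4*n^2) - 4*p*n^2) *
        ((2-c)^2*(2*c-2)*((n^2 + (2-c)^2 - p*(2-c)) + (p - 2*n)*(2-c))) := by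
      apply mul_nonneg hq
      apply mul_nonneg (by nlinarith) hS
    have F2 : 0 < 8*n^2*n*(2-c)^2*(2*c-2)*(n^2 + (2-c)^2 - p*(2-c)) := by
      apply mul_pos; apply mul_pos; apply mul_pos; apply mul_pos
      · positivity
      · positivity
      · positivity
      · linarith
      · exact hU
    have F3 : 0 ≤ 8*(2-c)^5*((2-c)*c - n^2)*(p - 2*n) := by
      apply mul_nonneg (mul_nonneg (by positivity) hlcw) hV
    have F4 : 0 ≤ (5*c-8)*(n^2-(2-c)^2)*((2-c)*c-n^2)*((2-c)*(2*c-2))*(p-2*n) := by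
      apply mul_nonneg; apply mul_nonneg; apply mul_nonneg; apply mul_nonneg
      · exact h85.le
      · exact hwl2
      · exact hlcw
      · apply mul_nonneg hl0.le; linarith
      · exact hV
    have F5 : 0 ≤ c*(2*c-2)*(2-c)*(p-2*n)*(n^2 + (2-c)^2 - p*(2-c))*
        ((n^2 + (2-c)^2 - p*(2-c)) + (p - 2*n)*(2-c)) := by
      apply mul_nonneg; apply mul_nonneg; apply mul_nonneg; apply mul_nonneg; apply mul_nonneg
      · linarith
      · linarith
      · exact hl0.le
      · exact hV
      · exact hU.le
      · exact hS
    have FC : (c^2 - 3)*((64*c - 16*c*n^2 - 128*c^2 + 16*c^2*n^2 + 96*c^3 - 4*c^3*n^2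
        - 32*c^4 + 4*c^5)*(p - 2*n)) = 0 := by rw [hcc3]; ring
    linarith [F1, F2, F3, F4, F5, FC]
  · -- big case
    have hA : 0 < n^2 + 3 - p*c := by linarith
    have hS : 0 ≤ (n^2 + 3 - p*c) + (p - 2*n)*c := by
      have := mul_nonneg hV (by linarith : (0:ℝ) ≤ c)
      linarith
    have hW : 0 ≤ (n^2)^2 + 6*n^2 - 3 := by
      have h1 : 0 ≤ (n^2 - (2*c-3))*(n^2 + 2*c + 3) :=
        mul_nonneg (by linarith) (by nlinarith)
      nlinarith [h1]
    have F1 : 0 ≤ (c*(p^2 - 4*n^2) - 4*p*n^2) * ((n^2 + 3 - p*c) + (p - 2*n)*c) :=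
      mul_nonneg hq hS
    have F2 : 0 < 8*n*n^2*(n^2 + 3 - p*c) := by
      apply mul_pos (by positivity) hA
    have F3 : 0 ≤ 3*((n^2)^2 + 6*n^2 - 3)*(p - 2*n) :=
      mul_nonneg (by linarith) hV
    have F4 : 0 ≤ (p - 2*n)*(n^2 + 3 - p*c)*((n^2 + 3 - p*c) + (p - 2*n)*c) :=
      mul_nonneg (mul_nonneg hV hA.le) hS
    have FC : (c^2 - 3)*(4*n^2*(p - 2*n)) = 0 := by rw [hcc3]; ring
    linarith [F1, F2, F3, F4, FC]

lemma oneside (c n m p q : ℝ) (hc : c^2 = 3) (hc1 : 1 < c) (hc2 : c < 2)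
    (hn : 2 - c < n) (hn' : n < c) (hm : 2 - c < m) (hm' : m < c)
    (h2n : 2*n ≤ p) (hq2 : 2*m ≤ q)
    (hpl : p*(2-c) < n^2 + (2-c)^2) (hpc : p*c < n^2 + 3) :
    p*m^2 - q*n^2 < 2*n*m*Real.sqrt (n^2 + m^2) := by
  have hn0 : 0 < n := by linarith
  have hm0 : 0 < m := by linarith
  have hρ0 : 0 ≤ Real.sqrt (n^2 + m^2) := Real.sqrt_nonneg _
  have hρ2 : (Real.sqrt (n^2 + m^2))^2 = n^2 + m^2 := Real.sq_sqrt (by positivity)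
  set ρ := Real.sqrt (n^2 + m^2)
  have step1 : c*(p^2 - 4*n^2) < 4*p*n^2 := quad_aux c n p hc hc1 hc2 hn hn' h2n hpl hpc
  have hp4 : 0 ≤ p^2 - 4*n^2 := by nlinarith
  have step2 : m*(p^2 - 4*n^2) < 4*p*n^2 :=
    lt_of_le_of_lt (by nlinarith [mul_le_mul_of_nonneg_right hm'.le hp4]) step1
  have step3 : (p*m - 2*n^2)^2 < 4*n^2*(n^2 + m^2) := by nlinarith [mul_lt_mul_of_pos_left step2 hm0]
  have step4 : p*m - 2*n^2 < 2*n*ρ := by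
    have h4 : (p*m - 2*n^2)^2 < (2*n*ρ)^2 := by nlinarith [hρ2]
    exact lt_of_pow_lt_pow_left₀ 2 (by positivity) h4
  have step5 : p*m^2 - q*n^2 ≤ m*(p*m - 2*n^2) := by
    nlinarith [mul_le_mul_of_nonneg_right hq2 (sq_nonneg n)]
  have step6 : m*(p*m - 2*n^2) < m*(2*n*ρ) := mul_lt_mul_of_pos_left step4 hm0
  nlinarith [step5, step6]

set_option maxHeartbeats 1000000 in
lemma key (c a b s t : ℝ) (hc : c^2 = 3) (hc1 : 1 < c) (hc2 : c < 2)
    (ha : 2 - c < a) (ha' : a < c) (hb : 2 - c < b) (hb' : b < c)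
    (hs : 2 - c < s) (hs' : s < c) (ht : 2 - c < t) (ht' : t < c) :
    (s*t*(a+b) - a*b*(s+t))^2 < 4*(a*b)*(s*t)*(a*b + s*t) := by
  have hl0 : 0 < 2 - c := by linarith
  have ha0 : 0 < a := by linarith
  have hb0 : 0 < b := by linarith
  have hs0 : 0 < s := by linarith
  have ht0 : 0 < t := by linarith
  set n := Real.sqrt (a*b) with hn_def
  set m := Real.sqrt (s*t) with hm_def
  have hn2 : n^2 = a*b := Real.sq_sqrt (by positivity)
  have hm2 : m^2 = s*t := Real.sq_sqrt (by positivity)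
  have hnn : 0 ≤ n := Real.sqrt_nonneg _
  have hmn : 0 ≤ m := Real.sqrt_nonneg _
  have hn : 2 - c < n := by
    have h1 : (2-c)^2 < n^2 := by
      rw [hn2]; nlinarith [mul_lt_mul'' ha hb hl0.le hl0.le]
    exact lt_of_pow_lt_pow_left₀ 2 hnn h1
  have hn' : n < c := by
    have h1 : n^2 < c^2 := by
      rw [hn2]; nlinarith [mul_lt_mul'' ha' hb' ha0.le hb0.le]
    exact lt_of_pow_lt_pow_left₀ 2 (by linarith) h1
  have hm : 2 - c < m := by
    have h1 : (2-c)^2 < m^2 := by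
      rw [hm2]; nlinarith [mul_lt_mul'' hs ht hl0.le hl0.le]
    exact lt_of_pow_lt_pow_left₀ 2 hmn h1
  have hm' : m < c := by
    have h1 : m^2 < c^2 := by
      rw [hm2]; nlinarith [mul_lt_mul'' hs' ht' hs0.le ht0.le]
    exact lt_of_pow_lt_pow_left₀ 2 (by linarith) h1
  have h2n : 2*n ≤ a + b := by
    have h := Real.sqrt_le_sqrt (show a*b ≤ ((a+b)/2)^2 by nlinarith [sq_nonneg (a-b)])
    rw [Real.sqrt_sq (by positivity)] at h
    linarith [h]
  have h2m : 2*m ≤ s + t := by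
    have h := Real.sqrt_le_sqrt (show s*t ≤ ((s+t)/2)^2 by nlinarith [sq_nonneg (s-t)])
    rw [Real.sqrt_sq (by positivity)] at h
    linarith [h]
  have hpl : (a+b)*(2-c) < n^2 + (2-c)^2 := by
    rw [hn2]; nlinarith [mul_pos (sub_pos.2 ha) (sub_pos.2 hb)]
  have hpc : (a+b)*c < n^2 + 3 := by
    rw [hn2]; nlinarith [mul_pos (sub_pos.2 ha') (sub_pos.2 hb'), hc]
  have hql : (s+t)*(2-c) < m^2 + (2-c)^2 := by
    rw [hm2]; nlinarith [mul_pos (sub_pos.2 hs) (sub_pos.2 ht)]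
  have hqc : (s+t)*c < m^2 + 3 := by
    rw [hm2]; nlinarith [mul_pos (sub_pos.2 hs') (sub_pos.2 ht'), hc]
  have h1 := oneside c n m (a+b) (s+t) hc hc1 hc2 hn hn' hm hm' h2n h2m hpl hpc
  have h2 := oneside c m n (s+t) (a+b) hc hc1 hc2 hm hm' hn hn' h2m h2n hql hqc
  rw [hn2, hm2] at h1 h2
  have hcomm : Real.sqrt (s*t + a*b) = Real.sqrt (a*b + s*t) := by rw [add_comm]
  rw [hcomm] at h2
  set ρ := Real.sqrt (a*b + s*t) with hρ_def
  have hρ2 : ρ^2 = a*b + s*t := Real.sq_sqrt (by positivity)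
  have hsq : ((a+b)*(s*t) - (s+t)*(a*b))^2 < (2*n*m*ρ)^2 := by
    apply sq_lt_sq'
    · linarith [h2]
    · linarith [h1]
  have e : (2*n*m*ρ)^2 = 4*(n^2)*(m^2)*(ρ^2) := by ring
  rw [hn2, hm2, hρ2] at e
  rw [e] at hsq
  rw [show (s*t*(a+b) - a*b*(s+t))^2 = ((a+b)*(s*t) - (s+t)*(a*b))^2 from by ring]
  linarith [hsq]

lemma signs (x y z : ℝ) : 0 ≤ x*y ∨ 0 ≤ x*z ∨ 0 ≤ y*z := by
  rcases le_or_gt 0 (x*y) with h | h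
  · exact Or.inl h
  rcases le_or_gt 0 (x*z) with h2 | h2
  · exact Or.inr (Or.inl h2)
  refine Or.inr (Or.inr ?_)
  nlinarith [mul_pos_of_neg_of_neg h h2, sq_nonneg x]

set_option maxHeartbeats 2000000 in
lemma twoPennies (c a b s t X1 Y1 Xi Yi Xj Yj : ℝ)
    (hc : c^2 = 3) (hc1 : 1 < c) (hc2 : c < 2)
    (ha : 2 - c < a) (ha' : a < c) (hb : 2 - c < b) (hb' : b < c)
    (hs : 2 - c < s) (hs' : s < c) (ht : 2 - c < t) (ht' : t < c)
    (E0 : X1^2 + Y1^2 = (a+b)^2)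
    (E1i : Xi^2 + Yi^2 = (a+s)^2)
    (E2i : (Xi - X1)^2 + (Yi - Y1)^2 = (b+s)^2)
    (E1j : Xj^2 + Yj^2 = (a+t)^2)
    (E2j : (Xj - X1)^2 + (Yj - Y1)^2 = (b+t)^2)
    (hS : (s+t)^2 ≤ (Xi - Xj)^2 + (Yi - Yj)^2)
    (hsgn : 0 ≤ (Xi*Y1 - Yi*X1) * (Xj*Y1 - Yj*X1)) : False := by
  have hDi : Xi*X1 + Yi*Y1 = a^2 + a*b + a*s - b*s := by
    linear_combination (E1i + E0 - E2i)/2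
  have hDj : Xj*X1 + Yj*Y1 = a^2 + a*b + a*t - b*t := by
    linear_combination (E1j + E0 - E2j)/2
  have hci : (Xi*Y1 - Yi*X1)^2 = 4*a*b*s*(a+b+s) := by
    linear_combination (X1^2+Y1^2)*E1i + (a+s)^2*E0
      - (Xi*X1 + Yi*Y1 + (a^2 + a*b + a*s - b*s))*hDi
  have hcj : (Xj*Y1 - Yj*X1)^2 = 4*a*b*t*(a+b+t) := by
    linear_combination (X1^2+Y1^2)*E1j + (a+t)^2*E0
      - (Xj*X1 + Yj*Y1 + (a^2 + a*b + a*t - b*t))*hDj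
  have hid : ((Xi - Xj)^2 + (Yi - Yj)^2) * (X1^2 + Y1^2) =
      (Xi^2 + Yi^2)*(X1^2 + Y1^2) + (Xj^2 + Yj^2)*(X1^2 + Y1^2)
      - 2*((Xi*X1 + Yi*Y1)*(Xj*X1 + Yj*Y1) + (Xi*Y1 - Yi*X1)*(Xj*Y1 - Yj*X1)) := by
    ring
  have hB : (0:ℝ) ≤ X1^2 + Y1^2 := by positivity
  have hSB : (s+t)^2*(X1^2 + Y1^2) ≤ ((Xi - Xj)^2 + (Yi - Yj)^2)*(X1^2 + Y1^2) :=
    mul_le_mul_of_nonneg_right hS hB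
  have hAiB : (Xi^2 + Yi^2)*(X1^2 + Y1^2) = (a+s)^2*(a+b)^2 := by rw [E1i, E0]
  have hAjB : (Xj^2 + Yj^2)*(X1^2 + Y1^2) = (a+t)^2*(a+b)^2 := by rw [E1j, E0]
  have hDD : (Xi*X1 + Yi*Y1)*(Xj*X1 + Yj*Y1)
      = (a^2 + a*b + a*s - b*s)*(a^2 + a*b + a*t - b*t) := by rw [hDi, hDj]
  have hstB : (s+t)^2*(X1^2 + Y1^2) = (s+t)^2*(a+b)^2 := by rw [E0]
  have hM : 2*((Xi*Y1 - Yi*X1)*(Xj*Y1 - Yj*X1))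
      ≤ 4*(a*b*(a+b)*(s+t) - (a^2+b^2)*s*t) := by
    linarith [hSB, hid, hAiB, hAjB, hDD, hstB]
  have hkey := key c a b s t hc hc1 hc2 ha ha' hb hb' hs hs' ht ht'
  have hsq : (2*((Xi*Y1 - Yi*X1)*(Xj*Y1 - Yj*X1)))^2
      ≤ (4*(a*b*(a+b)*(s+t) - (a^2+b^2)*s*t))^2 := by
    apply pow_le_pow_left₀ (by linarith) hM
  have heq : (2*((Xi*Y1 - Yi*X1)*(Xj*Y1 - Yj*X1)))^2
      = 4*((Xi*Y1 - Yi*X1)^2)*((Xj*Y1 - Yj*X1)^2) := by ring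
  rw [hci, hcj] at heq
  have hring : (4*(a*b*(a+b)*(s+t) - (a^2+b^2)*s*t))^2
      = 4*(4*a*b*s*(a+b+s))*(4*a*b*t*(a+b+t))
        - 16*(a+b)^2*(4*(a*b)*(s*t)*(a*b + s*t) - (s*t*(a+b) - a*b*(s+t))^2) := by
    ring
  have hdF : 0 < 16*(a+b)^2*(4*(a*b)*(s*t)*(a*b + s*t) - (s*t*(a+b) - a*b*(s+t))^2) := by
    have h1 : 0 < 4*(a*b)*(s*t)*(a*b + s*t) - (s*t*(a+b) - a*b*(s+t))^2 := by linarith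
    have hab : 0 < a + b := by linarith
    have h2 : (0:ℝ) < 16*(a+b)^2 := by positivity
    exact mul_pos h2 h1
  linarith [hsq, heq, hring, hdF]

set_option maxHeartbeats 2000000 in
/-- For `0 < ε ≤ √3 - 1`, there is no configuration of 5 pennies with radii in
`(1-ε, 1+ε)` and pairwise disjoint interiors in which pennies `0` and `1` touch each
other and both touch each of the pennies `2, 3, 4`. Consequently, in an `ε`-interval radii
penny graph any pair of adjacent vertices has at most two common neighbours. -/
theorem interval_radii_penny_common_neighbours (ε : ℝ) (hε : 0 < ε)
    (hε' : ε ≤ Real.sqrt 3 - 1) :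
    ¬ ∃ (p : Fin 5 → EuclideanSpace ℝ (Fin 2)) (r : Fin 5 → ℝ),
      (∀ i, r i ∈ Set.Ioo (1 - ε) (1 + ε)) ∧
      (∀ i j, i ≠ j → r i + r j ≤ ‖p i - p j‖) ∧
      ‖p 0 - p 1‖ = r 0 + r 1 ∧
      (∀ i : Fin 5, 2 ≤ i → ‖p 0 - p i‖ = r 0 + r i ∧ ‖p 1 - p i‖ = r 1 + r i) := by
  rintro ⟨p, r, hr, hdisj, h01, htouch⟩
  set c := Real.sqrt 3 with hc_def
  have hc : c^2 = 3 := Real.sq_sqrt (by norm_num)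
  have hc0 : 0 ≤ c := Real.sqrt_nonneg 3
  have hc1 : 1 < c := by nlinarith
  have hc2 : c < 2 := by nlinarith
  have hlo : ∀ i, 2 - c < r i := fun i => by
    have := (hr i).1; linarith
  have hhi : ∀ i, r i < c := fun i => by
    have := (hr i).2; linarith
  have hrpos : ∀ i, 0 < r i := fun i => by have := hlo i; linarith
  have nsq : ∀ x y : EuclideanSpace ℝ (Fin 2),
      ‖x - y‖^2 = (x 0 - y 0)^2 + (x 1 - y 1)^2 := by
    intro x y
    rw [EuclideanSpace.norm_eq, Real.sq_sqrt (by positivity)]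
    simp [Fin.sum_univ_two, Real.norm_eq_abs, sq_abs]
  have sq_eq : ∀ {i j : Fin 5} {R : ℝ}, ‖p i - p j‖ = R →
      (p i 0 - p j 0)^2 + (p i 1 - p j 1)^2 = R^2 := by
    intro i j R h
    rw [← nsq, h]
  have sq_le : ∀ i j : Fin 5, i ≠ j →
      (r i + r j)^2 ≤ (p i 0 - p j 0)^2 + (p i 1 - p j 1)^2 := by
    intro i j hij
    rw [← nsq]
    exact pow_le_pow_left₀ (by have := hrpos i; have := hrpos j; linarith)
      (hdisj i j hij) 2
  -- squared touching equations
  have E0 := sq_eq h01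
  have h2 := htouch 2 (by decide)
  have h3 := htouch 3 (by decide)
  have h4 := htouch 4 (by decide)
  have E12 := sq_eq h2.1
  have E22 := sq_eq h2.2
  have E13 := sq_eq h3.1
  have E23 := sq_eq h3.2
  have E14 := sq_eq h4.1
  have E24 := sq_eq h4.2
  -- cross products
  rcases signs
      ((p 2 0 - p 0 0)*(p 1 1 - p 0 1) - (p 2 1 - p 0 1)*(p 1 0 - p 0 0))
      ((p 3 0 - p 0 0)*(p 1 1 - p 0 1) - (p 3 1 - p 0 1)*(p 1 0 - p 0 0))
      ((p 4 0 - p 0 0)*(p 1 1 - p 0 1) - (p 4 1 - p 0 1)*(p 1 0 - p 0 0))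
      with hsgn | hsgn | hsgn
  · exact twoPennies c (r 0) (r 1) (r 2) (r 3)
      (p 1 0 - p 0 0) (p 1 1 - p 0 1) (p 2 0 - p 0 0) (p 2 1 - p 0 1)
      (p 3 0 - p 0 0) (p 3 1 - p 0 1)
      hc hc1 hc2 (hlo 0) (hhi 0) (hlo 1) (hhi 1) (hlo 2) (hhi 2) (hlo 3) (hhi 3)
      (by linear_combination E0) (by linear_combination E12) (by linear_combination E22)
      (by linear_combination E13) (by linear_combination E23)
      (by have := sq_le 2 3 (by decide); linarith [this]) hsgn
  · exact twoPennies c (r 0) (r 1) (r 2) (r 4)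
      (p 1 0 - p 0 0) (p 1 1 - p 0 1) (p 2 0 - p 0 0) (p 2 1 - p 0 1)
      (p 4 0 - p 0 0) (p 4 1 - p 0 1)
      hc hc1 hc2 (hlo 0) (hhi 0) (hlo 1) (hhi 1) (hlo 2) (hhi 2) (hlo 4) (hhi 4)
      (by linear_combination E0) (by linear_combination E12) (by linear_combination E22)
      (by linear_combination E14) (by linear_combination E24)
      (by have := sq_le 2 4 (by decide); linarith [this]) hsgn
  · exact twoPennies c (r 0) (r 1) (r 3) (r 4)
      (p 1 0 - p 0 0) (p 1 1 - p 0 1) (p 3 0 - p 0 0) (p 3 1 - p 0 1)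
      (p 4 0 - p 0 0) (p 4 1 - p 0 1)
      hc hc1 hc2 (hlo 0) (hhi 0) (hlo 1) (hhi 1) (hlo 3) (hhi 3) (hlo 4) (hhi 4)
      (by linear_combination E0) (by linear_combination E13) (by linear_combination E23)
      (by linear_combination E14) (by linear_combination E24)
      (by have := sq_le 3 4 (by decide); linarith [this]) hsgn
end

section
/- Let r_i, r_j ∈ (0, 3 + 2√3) and let p_0, p_i, p_j ∈ ℝ² satisfy ‖p_0 − p_i‖ = 1 + r_i, ‖p_0 − p_j‖ = 1 + r_j, and ‖p_i − p_j‖ = r_i + r_j. Then the (undirected) angle at p_0 between p_i and p_j satisfies ∠(p_i, p_0, p_j) < 2π/3. -/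
/-- If a unit-radius disc centred at `p₀` is in contact with discs of radii
`rᵢ, rⱼ < 3 + 2√3` centred at `pᵢ` and `pⱼ`, and these two discs are in contact with each
other, then the angle at `p₀` between `pᵢ` and `pⱼ` is less than `2π/3`. -/
theorem contact_angle_lt (ri rj : ℝ)
    (hri : ri ∈ Set.Ioo 0 (3 + 2 * Real.sqrt 3))
    (hrj : rj ∈ Set.Ioo 0 (3 + 2 * Real.sqrt 3))
    (p0 pi pj : EuclideanSpace ℝ (Fin 2))
    (h0i : ‖p0 - pi‖ = 1 + ri) (h0j : ‖p0 - pj‖ = 1 + rj)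
    (hij : ‖pi - pj‖ = ri + rj) :
    EuclideanGeometry.angle pi p0 pj < 2 * Real.pi / 3 := by
  obtain ⟨hri0, hri1⟩ := hri
  obtain ⟨hrj0, hrj1⟩ := hrj
  have hs : Real.sqrt 3 ^ 2 = 3 := Real.sq_sqrt (by norm_num)
  have hs0 : (0:ℝ) < Real.sqrt 3 := Real.sqrt_pos.mpr (by norm_num)
  have hlc := EuclideanGeometry.law_cos pi p0 pj
  have d1 : dist pi p0 = 1 + ri := by rw [dist_comm, dist_eq_norm]; exact h0i
  have d2 : dist pj p0 = 1 + rj := by rw [dist_comm, dist_eq_norm]; exact h0j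
  have d3 : dist pi pj = ri + rj := by rw [dist_eq_norm]; exact hij
  rw [d1, d2, d3] at hlc
  set θ := EuclideanGeometry.angle pi p0 pj with hθ
  have key : (3:ℝ) + 3*ri + 3*rj - ri*rj > 0 := by
    rcases le_or_gt rj 3 with h | h
    · nlinarith [mul_le_mul_of_nonneg_left h hri0.le]
    · have h1 : ri * (rj - 3) < (3 + 2 * Real.sqrt 3) * (rj - 3) :=
        mul_lt_mul_of_pos_right hri1 (by linarith)
      have h2 : (2 * Real.sqrt 3) * rj < (2 * Real.sqrt 3) * (3 + 2 * Real.sqrt 3) :=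
        mul_lt_mul_of_pos_left hrj1 (by linarith)
      nlinarith [h1, h2, hs]
  have hθpi : θ ≤ Real.pi := EuclideanGeometry.angle_le_pi pi p0 pj
  by_contra hcon
  push_neg at hcon
  have h23 : Real.cos (2 * Real.pi / 3) = -1/2 := by
    have h : 2 * Real.pi / 3 = Real.pi - Real.pi / 3 := by ring
    rw [h, Real.cos_pi_sub, Real.cos_pi_div_three]
    norm_num
  have hcle : Real.cos θ ≤ -1/2 := by
    rw [← h23]
    exact Real.cos_le_cos_of_nonneg_of_le_pi (by positivity) hθpi hcon
  have h2 : 2 * ((1+ri)*(1+rj)) * Real.cos θ ≤ 2 * ((1+ri)*(1+rj)) * (-1/2) := by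
    apply mul_le_mul_of_nonneg_left hcle
    positivity
  nlinarith [hlc, h2, key]
end
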